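/- arXiv:1404.7616 — 6 statements merged into one kernel-verified Lean document; each statement's English description precedes it below -/
import Mathlib

section
/- If f satisfies the gap-opening profile, then for every λ ∈ [0,1] the spectral gap of H̃(λ) satisfies E₁(λ) − E₀(λ) ≥ f₀αΔ; precisely, if ψ₀ is a unit eigenvector of H̃(λ) whose eigenvalue E₀ is the least eigenvalue, then every eigenvector of H̃(λ) orthogonal to ψ₀ has eigenvalue at least E₀ + f₀αΔ. -/
/-!
Let `(p, q)` be the ground eigenvector of the two-level matrix `[[λΔ, fΔα], [fΔα, (1-λ)Δ]]`,
whose eigenvalues are `Δ/2 ∓ r` with `r = √((λ - 1/2)²Δ² + f²Δ²α²)`. The trial vector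
`(pξ₀, qη₀)` has energy `Δ/2 - r`, so `E₀ ≤ Δ/2 - r`. On its orthogonal complement the energy is
at least `Δ/2 - r + f₀αΔ`: writing each component as a multiple of `ξ₀` (resp. `η₀`) plus an
orthogonal remainder, the multiples see the upper level `Δ/2 + r`, the remainders see the gap `Δ`
of `H₁`, `H₂`, and the coupling `f(λ)Δ ≤ f₀Δ` between them is absorbed by AM-GM because the
profile forces `r ≥ f₀αΔ` (near `λ = 1/2` through the off-diagonal term, elsewhere through the
detuning). The span of `ψ₀` and `φ` meets that complement, which forces `E ≥ E₀ + f₀αΔ`.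
-/

section

open RCLike WithLp ComplexConjugate

variable {𝕜 V : Type*} [RCLike 𝕜] [NormedAddCommGroup V] [InnerProductSpace 𝕜 V]

/-- `(p, q)` and `(q, -p)` are unit eigenvectors of `[[A, B], [B, C]]`. -/
theorem exists_two_level_ground_state (A C B : ℝ) :
    ∃ p q : ℝ, p ^ 2 + q ^ 2 = 1 ∧
      A * p ^ 2 + C * q ^ 2 + 2 * B * (p * q) = (A + C) / 2 - √(((A - C) / 2) ^ 2 + B ^ 2) ∧
      A * q ^ 2 + C * p ^ 2 - 2 * B * (p * q) = (A + C) / 2 + √(((A - C) / 2) ^ 2 + B ^ 2) := by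
  set D := (A - C) / 2 with hD
  set r := √(D ^ 2 + B ^ 2)
  have hr : r ^ 2 = D ^ 2 + B ^ 2 := Real.sq_sqrt (by positivity)
  have hDr : |D| ≤ r := Real.abs_le_sqrt (by nlinarith)
  rcases (le_abs_self D).trans hDr |>.eq_or_lt with hDr' | hDr'
  · have hB : B = 0 := pow_eq_zero_iff two_ne_zero |>.1 (by rw [← hDr'] at hr; linarith)
    exact ⟨0, 1, by norm_num, by rw [hB, ← hDr', hD]; ring, by rw [hB, ← hDr', hD]; ring⟩
  set k := √(2 * r * (r - D))
  have hr0 : 0 < r := by linarith [neg_abs_le D]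
  have hk : k ^ 2 = 2 * r * (r - D) := Real.sq_sqrt (by nlinarith)
  have hk0 : k ≠ 0 := by
    intro h; rw [h] at hk; nlinarith
  clear_value D r k
  refine ⟨(r - D) / k, -B / k, ?_, ?_, ?_⟩
  · field_simp
    linear_combination -hk - hr
  · field_simp
    linear_combination -2 * (C - 2 * (r - D)) * hr - (A + C - 2 * r) * hk + 4 * (r - D) * D * hD
  · field_simp
    linear_combination -2 * (A + 2 * (r - D)) * hr - (A + C + 2 * r) * hk - 4 * (r - D) * D * hD

theorem two_level_form_eq_of_orthogonal {A C B p q ℓ : ℝ} (hpq : p ^ 2 + q ^ 2 = 1)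
    (h : A * q ^ 2 + C * p ^ 2 - 2 * B * (p * q) = ℓ) {a b : 𝕜} (hab : p * a + q * b = 0) :
    A * ‖a‖ ^ 2 + C * ‖b‖ ^ 2 + 2 * B * re (conj a * b) = ℓ * (‖a‖ ^ 2 + ‖b‖ ^ 2) := by
  set z := (q : 𝕜) * a - p * b
  have hpq' : (p : 𝕜) ^ 2 + (q : 𝕜) ^ 2 = 1 := by exact_mod_cast hpq
  have ha : a = q * z := by linear_combination (p : 𝕜) * hab - a * hpq'
  have hb : b = -(p * z) := by linear_combination (q : 𝕜) * hab - b * hpq'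
  have hab' : conj a * b = ((-(p * q) * ‖z‖ ^ 2 : ℝ) : 𝕜) := by
    rw [ha, hb, map_mul, conj_ofReal]
    push_cast
    rw [← RCLike.conj_mul]
    ring
  rw [hab', ofReal_re, ha, hb, norm_neg, norm_mul, norm_mul, norm_ofReal, norm_ofReal,
    mul_pow, mul_pow, sq_abs, sq_abs]
  linear_combination ‖z‖ ^ 2 * h - ‖z‖ ^ 2 * ℓ * hpq

theorem quadratic_form_le_of_small_coupling {Δ g c r a b x y : ℝ} (hg : 0 ≤ g)
    (hgΔ : 10 * g ≤ Δ) (hgc : 10 * g ^ 2 ≤ c * Δ) (hc : 0 < c) (hcr : c ≤ r) :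
    (Δ / 2 - r + c) * (a ^ 2 + b ^ 2 + x ^ 2 + y ^ 2)
      ≤ (Δ / 2 + r) * (a ^ 2 + b ^ 2) + Δ * (x ^ 2 + y ^ 2) - 2 * g * (a * y + b * x + x * y) := by
  -- AM-GM with weights `c / 2` and `2 g² / c ≤ Δ / 5`
  have amgm (s t : ℝ) : 2 * g * (s * t) ≤ c / 2 * s ^ 2 + Δ / 5 * t ^ 2 := by
    refine le_of_mul_le_mul_left ?_ hc
    nlinarith [sq_nonneg (c * s - 2 * g * t), mul_le_mul_of_nonneg_right hgc (sq_nonneg t)]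
  have hxy : 2 * g * (x * y) ≤ Δ / 10 * (x ^ 2 + y ^ 2) := by
    nlinarith [mul_nonneg hg (sq_nonneg (x - y)),
      mul_le_mul_of_nonneg_right hgΔ (add_nonneg (sq_nonneg x) (sq_nonneg y))]
  linarith [amgm a y, amgm b x, mul_nonneg (by linarith : 0 ≤ 2 * r - 3 * c / 2)
    (add_nonneg (sq_nonneg a) (sq_nonneg b)), mul_nonneg (by linarith : 0 ≤ Δ / 5 + r - c)
    (add_nonneg (sq_nonneg x) (sq_nonneg y))]

namespace LinearMap.IsSymmetric

theorem mul_norm_sq_le_re_inner_apply [FiniteDimensional 𝕜 V] {T : V →ₗ[𝕜] V}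
    (hT : T.IsSymmetric) {c : ℝ} (hc : ∀ (μ : 𝕜) (v : V), v ≠ 0 → T v = μ • v → c ≤ re μ)
    (x : V) : c * ‖x‖ ^ 2 ≤ re (inner 𝕜 x (T x)) := by
  rcases eq_or_ne x 0 with rfl | hx
  · simp
  have : Nontrivial V := ⟨⟨x, 0, hx⟩⟩
  obtain ⟨v, hv⟩ := hT.hasEigenvalue_iInf_of_finiteDimensional.exists_hasEigenvector
  have hbdd : BddBelow (Set.range fun y : {y : V // y ≠ 0} ↦
      re (inner 𝕜 (T y) (y : V)) / ‖(y : V)‖ ^ 2) := by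
    refine ⟨-‖LinearMap.toContinuousLinearMap T‖, Set.forall_mem_range.2 fun y ↦ ?_⟩
    exact neg_le_of_abs_le ((LinearMap.toContinuousLinearMap T).rayleighQuotient_le_norm y)
  have hmin := (hc _ v hv.2 hv.apply_eq_smul).trans
    (by simpa using ciInf_le hbdd ⟨x, hx⟩)
  rwa [le_div_iff₀ (by positivity), hT] at hmin

end LinearMap.IsSymmetric

theorem le_max_re_of_orthogonal_eigenvectors {T : V →ₗ[𝕜] V} {v x y : V} {a b : 𝕜} {M : ℝ}
    (hx : x ≠ 0) (hy : y ≠ 0) (hxy : inner 𝕜 x y = 0) (hTx : T x = a • x) (hTy : T y = b • y)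
    (hM : ∀ ψ, inner 𝕜 v ψ = 0 → M * ‖ψ‖ ^ 2 ≤ re (inner 𝕜 ψ (T ψ))) :
    M ≤ max (re a) (re b) := by
  have hyx : inner 𝕜 y x = 0 := inner_eq_zero_symm.1 hxy
  by_cases hvx : inner 𝕜 v x = 0
  · have h := hM x hvx
    rw [hTx, inner_smul_right, inner_self_eq_norm_sq_to_K, ← ofReal_pow, re_mul_ofReal] at h
    exact (le_of_mul_le_mul_right h (by positivity)).trans (le_max_left _ _)
  set s := inner 𝕜 v y
  set t := -inner 𝕜 v x
  have hψ : inner 𝕜 v (s • x + t • y) = 0 := by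
    simp only [s, t, inner_add_right, inner_smul_right]; ring
  have hnorm : ‖s • x + t • y‖ ^ 2 = ‖s‖ ^ 2 * ‖x‖ ^ 2 + ‖t‖ ^ 2 * ‖y‖ ^ 2 := by
    rw [@norm_add_sq 𝕜, inner_smul_left, inner_smul_right, hxy, norm_smul, norm_smul]
    simp only [mul_zero, map_zero, mul_pow]
    ring
  have hre : re (inner 𝕜 (s • x + t • y) (T (s • x + t • y)))
      = ‖s‖ ^ 2 * ‖x‖ ^ 2 * re a + ‖t‖ ^ 2 * ‖y‖ ^ 2 * re b := by
    simp only [map_add, map_smul, hTx, hTy, inner_add_left, inner_add_right, inner_smul_left,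
      inner_smul_right, hxy, hyx, inner_self_eq_norm_sq_to_K, mul_zero, add_zero, zero_add]
    have hconj (z c : 𝕜) (r : ℝ) :
        z * (c * (conj z * (r : 𝕜) ^ 2)) = ((‖z‖ ^ 2 * r ^ 2 : ℝ) : 𝕜) * c := by
      push_cast; rw [← mul_conj]; ring
    rw [hconj, hconj, re_ofReal_mul, re_ofReal_mul]
  have hPQ : 0 < ‖s‖ ^ 2 * ‖x‖ ^ 2 + ‖t‖ ^ 2 * ‖y‖ ^ 2 := by
    have : t ≠ 0 := neg_ne_zero.2 hvx
    positivity
  have h := hM _ hψ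
  rw [hnorm, hre] at h
  refine le_of_mul_le_mul_right (h.trans ?_) hPQ
  have ha := mul_le_mul_of_nonneg_left (le_max_left (re a) (re b))
    (by positivity : (0:ℝ) ≤ ‖s‖ ^ 2 * ‖x‖ ^ 2)
  have hb := mul_le_mul_of_nonneg_left (le_max_right (re a) (re b))
    (by positivity : (0:ℝ) ≤ ‖t‖ ^ 2 * ‖y‖ ^ 2)
  linarith

theorem exists_eq_smul_add_inner_eq_zero (ξ u : V) :
    ∃ (a : 𝕜) (u' : V), u = a • ξ + u' ∧ inner 𝕜 ξ u' = 0 := by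
  obtain ⟨y, hy, u', hu', rfl⟩ := (𝕜 ∙ ξ).exists_add_mem_mem_orthogonal u
  obtain ⟨a, rfl⟩ := Submodule.mem_span_singleton.1 hy
  exact ⟨a, u', rfl, Submodule.mem_orthogonal_singleton_iff_inner_right.1 hu'⟩

theorem inner_smul_add_of_inner_eq_zero {ξ u : V} (a : 𝕜) (hξ : ‖ξ‖ = 1)
    (hu : inner 𝕜 ξ u = 0) :
    inner 𝕜 ξ (a • ξ + u) = a := by
  rw [inner_add_right, inner_smul_right, inner_self_eq_norm_sq_to_K, hξ, hu]; simp

theorem norm_smul_add_sq_of_inner_eq_zero {ξ u : V} (a : 𝕜) (hξ : ‖ξ‖ = 1)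
    (hu : inner 𝕜 ξ u = 0) :
    ‖a • ξ + u‖ ^ 2 = ‖a‖ ^ 2 + ‖u‖ ^ 2 := by
  rw [@norm_add_sq 𝕜, inner_smul_left, hu, norm_smul, hξ]; simp

theorem inner_smul_add_map_smul_add {ξ u : V} (a : 𝕜) {H : V →ₗ[𝕜] V} (hH : H.IsSymmetric)
    (hHξ : H ξ = 0) :
    inner 𝕜 (a • ξ + u) (H (a • ξ + u)) = inner 𝕜 u (H u) := by
  rw [map_add, map_smul, hHξ, smul_zero, zero_add, inner_add_left, inner_smul_left, ← hH,
    hHξ, inner_zero_left, mul_zero, zero_add]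

theorem re_inner_smul_add_smul_add_ge {ξ η u w : V} {α : ℝ} (hξ : ‖ξ‖ = 1) (hη : ‖η‖ = 1)
    (hα : inner 𝕜 ξ η = (α : 𝕜)) (a b : 𝕜) :
    α * re (conj a * b) - ‖a‖ * ‖w‖ - ‖b‖ * ‖u‖ - ‖u‖ * ‖w‖
      ≤ re (inner 𝕜 (a • ξ + u) (b • η + w)) := by
  have hexp : inner 𝕜 (a • ξ + u) (b • η + w)
      = (α : 𝕜) * (conj a * b) + (conj a * inner 𝕜 ξ w + (b * inner 𝕜 u η + inner 𝕜 u w)) := by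
    simp only [inner_add_left, inner_add_right, inner_smul_left, inner_smul_right, hα]
    ring
  have hre (z : 𝕜) (c : ℝ) (hz : ‖z‖ ≤ c) : -c ≤ re z :=
    (neg_le_neg hz).trans (neg_le_of_abs_le (abs_re_le_norm z))
  have h₁ := hre (conj a * inner 𝕜 ξ w) (‖a‖ * ‖w‖) <| by
    simpa [hξ] using mul_le_mul_of_nonneg_left (norm_inner_le_norm (𝕜 := 𝕜) ξ w) (norm_nonneg a)
  have h₂ := hre (b * inner 𝕜 u η) (‖b‖ * ‖u‖) <| by
    simpa [hη] using mul_le_mul_of_nonneg_left (norm_inner_le_norm (𝕜 := 𝕜) u η) (norm_nonneg b)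
  have h₃ := hre (inner 𝕜 u w) (‖u‖ * ‖w‖) (norm_inner_le_norm u w)
  rw [hexp, map_add, map_add, map_add, re_ofReal_mul]
  linarith

/-- `T` acts on `V ⊕ V` as `H̃(λ)` does, with `A = λΔ`, `C = (1 - λ)Δ` and `g = f(λ)Δ`. -/
def IsCoupledSum (H₁ H₂ : V →ₗ[𝕜] V) (A C g : ℝ)
    (T : WithLp 2 (V × V) →ₗ[𝕜] WithLp 2 (V × V)) : Prop :=
  ∀ u w : V, T (toLp 2 (u, w)) =
    toLp 2 (H₁ u + (A : 𝕜) • u + (g : 𝕜) • w, H₂ w + (C : 𝕜) • w + (g : 𝕜) • u)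

namespace IsCoupledSum

variable {H₁ H₂ : V →ₗ[𝕜] V} {A C g : ℝ} {T : WithLp 2 (V × V) →ₗ[𝕜] WithLp 2 (V × V)}

theorem isSymmetric (hT : IsCoupledSum H₁ H₂ A C g T) (hH₁ : H₁.IsSymmetric)
    (hH₂ : H₂.IsSymmetric) : T.IsSymmetric := by
  rintro ⟨u, w⟩ ⟨u', w'⟩
  rw [hT, hT]
  simp only [prod_inner_apply, inner_add_left, inner_add_right, inner_smul_left,
    inner_smul_right, conj_ofReal, hH₁ u, hH₂ w]
  ring

theorem re_inner_apply (hT : IsCoupledSum H₁ H₂ A C g T) (u w : V) :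
    re (inner 𝕜 (toLp 2 (u, w)) (T (toLp 2 (u, w))))
      = re (inner 𝕜 u (H₁ u)) + A * ‖u‖ ^ 2 + re (inner 𝕜 w (H₂ w)) + C * ‖w‖ ^ 2
        + 2 * g * re (inner 𝕜 u w) := by
  rw [hT, prod_inner_apply]
  simp only [inner_add_right, inner_smul_right, inner_self_eq_norm_sq_to_K, map_add,
    re_ofReal_mul, ← ofReal_pow, ofReal_re, inner_re_symm w u]
  ring

theorem re_inner_apply_smul_add_ge (hT : IsCoupledSum H₁ H₂ A C g T)
    (hH₁ : H₁.IsSymmetric) (hH₂ : H₂.IsSymmetric) {ξ η : V} (hξ : ‖ξ‖ = 1) (hη : ‖η‖ = 1)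
    (hH₁ξ : H₁ ξ = 0) (hH₂η : H₂ η = 0) {Δ : ℝ}
    (hgap₁ : ∀ v : V, inner 𝕜 ξ v = 0 → Δ * ‖v‖ ^ 2 ≤ re (inner 𝕜 v (H₁ v)))
    (hgap₂ : ∀ v : V, inner 𝕜 η v = 0 → Δ * ‖v‖ ^ 2 ≤ re (inner 𝕜 v (H₂ v)))
    {α : ℝ} (hα : inner 𝕜 ξ η = (α : 𝕜)) (hg : 0 ≤ g) (a b : 𝕜) {u w : V}
    (hu : inner 𝕜 ξ u = 0) (hw : inner 𝕜 η w = 0) :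
    A * ‖a‖ ^ 2 + C * ‖b‖ ^ 2 + 2 * (g * α) * re (conj a * b)
        + (Δ + A) * ‖u‖ ^ 2 + (Δ + C) * ‖w‖ ^ 2 - 2 * g * (‖a‖ * ‖w‖ + ‖b‖ * ‖u‖ + ‖u‖ * ‖w‖)
      ≤ re (inner 𝕜 (toLp 2 (a • ξ + u, b • η + w)) (T (toLp 2 (a • ξ + u, b • η + w)))) := by
  rw [hT.re_inner_apply, inner_smul_add_map_smul_add a hH₁ hH₁ξ,
    inner_smul_add_map_smul_add b hH₂ hH₂η, norm_smul_add_sq_of_inner_eq_zero a hξ hu,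
    norm_smul_add_sq_of_inner_eq_zero b hη hw]
  have hcross := mul_le_mul_of_nonneg_left
    (re_inner_smul_add_smul_add_ge (u := u) (w := w) hξ hη hα a b) (by positivity : 0 ≤ 2 * g)
  linarith [hgap₁ u hu, hgap₂ w hw]

theorem re_inner_apply_toLp_smul_smul (hT : IsCoupledSum H₁ H₂ A C g T) {ξ η : V}
    (hξ : ‖ξ‖ = 1) (hη : ‖η‖ = 1) (hH₁ξ : H₁ ξ = 0) (hH₂η : H₂ η = 0) {α : ℝ}
    (hα : inner 𝕜 ξ η = (α : 𝕜)) (p q : ℝ) :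
    re (inner 𝕜 (toLp 2 ((p : 𝕜) • ξ, (q : 𝕜) • η)) (T (toLp 2 ((p : 𝕜) • ξ, (q : 𝕜) • η))))
      = A * p ^ 2 + C * q ^ 2 + 2 * (g * α) * (p * q) := by
  rw [hT.re_inner_apply]
  simp only [map_smul, hH₁ξ, hH₂η, smul_zero, inner_zero_right, map_zero, norm_smul,
    norm_algebraMap', Real.norm_eq_abs, hξ, hη, mul_one, sq_abs, inner_smul_right,
    inner_smul_left, conj_ofReal, hα, mul_re, ofReal_re, ofReal_im, mul_zero, sub_zero]
  ring

theorem mul_norm_sq_le_re_inner_apply_of_inner_eq_zero (hT : IsCoupledSum H₁ H₂ A C g T)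
    (hH₁ : H₁.IsSymmetric) (hH₂ : H₂.IsSymmetric) {ξ η : V} (hξ : ‖ξ‖ = 1) (hη : ‖η‖ = 1)
    (hH₁ξ : H₁ ξ = 0) (hH₂η : H₂ η = 0) {Δ : ℝ}
    (hgap₁ : ∀ v : V, inner 𝕜 ξ v = 0 → Δ * ‖v‖ ^ 2 ≤ re (inner 𝕜 v (H₁ v)))
    (hgap₂ : ∀ v : V, inner 𝕜 η v = 0 → Δ * ‖v‖ ^ 2 ≤ re (inner 𝕜 v (H₂ v)))
    {α : ℝ} (hα : inner 𝕜 ξ η = (α : 𝕜)) (hA : 0 ≤ A) (hC : 0 ≤ C)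
    (hg : 0 ≤ g) (hgΔ : 10 * g ≤ Δ) {c r : ℝ} (hgc : 10 * g ^ 2 ≤ c * Δ) (hc : 0 < c)
    (hcr : c ≤ r) {p q : ℝ} (hpq : p ^ 2 + q ^ 2 = 1)
    (hupper : A * q ^ 2 + C * p ^ 2 - 2 * (g * α) * (p * q) = Δ / 2 + r)
    (ψ : WithLp 2 (V × V)) (hψ : inner 𝕜 (toLp 2 ((p : 𝕜) • ξ, (q : 𝕜) • η)) ψ = 0) :
    (Δ / 2 - r + c) * ‖ψ‖ ^ 2 ≤ re (inner 𝕜 ψ (T ψ)) := by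
  obtain ⟨u₀, w₀⟩ := ψ
  obtain ⟨a, u, rfl, hu⟩ := exists_eq_smul_add_inner_eq_zero (𝕜 := 𝕜) ξ u₀
  obtain ⟨b, w, rfl, hw⟩ := exists_eq_smul_add_inner_eq_zero (𝕜 := 𝕜) η w₀
  have hab : (p : 𝕜) * a + q * b = 0 := by
    rw [prod_inner_apply] at hψ
    simpa only [inner_smul_left, conj_ofReal, inner_smul_add_of_inner_eq_zero _ hξ hu,
      inner_smul_add_of_inner_eq_zero _ hη hw] using hψ
  have hnorm : ‖toLp 2 (a • ξ + u, b • η + w)‖ ^ 2 = ‖a‖ ^ 2 + ‖b‖ ^ 2 + ‖u‖ ^ 2 + ‖w‖ ^ 2 := by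
    rw [prod_norm_sq_eq_of_L2]
    simp only [toLp_fst, toLp_snd, norm_smul_add_sq_of_inner_eq_zero _ hξ hu,
      norm_smul_add_sq_of_inner_eq_zero _ hη hw]
    ring
  rw [hnorm]
  have hform := two_level_form_eq_of_orthogonal hpq hupper hab
  have hlow := hT.re_inner_apply_smul_add_ge hH₁ hH₂ hξ hη hH₁ξ hH₂η hgap₁ hgap₂ hα hg a b hu hw
  have herr := quadratic_form_le_of_small_coupling (a := ‖a‖) (b := ‖b‖) (x := ‖u‖) (y := ‖w‖)
    hg hgΔ hgc hc hcr
  linarith [mul_nonneg hA (sq_nonneg ‖u‖), mul_nonneg hC (sq_nonneg ‖w‖)]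

end IsCoupledSum

theorem le_of_gap_profile {y f₀ α d : ℝ} (hf₀ : 0 ≤ f₀) (hf₀' : f₀ ≤ 1)
    (hmid : d ≤ f₀ * α → y = f₀) (hmed : f₀ * α < d → d ≤ 1 / 5 → f₀ ^ 2 ≤ y ∧ y ≤ f₀)
    (htail : 1 / 5 < d → y ≤ f₀ ^ 2) : y ≤ f₀ := by
  rcases le_or_gt d (f₀ * α) with h | h
  · exact (hmid h).le
  rcases le_or_gt d (1 / 5) with h' | h'
  · exact (hmed h h').2
  · nlinarith [htail h']

theorem mul_le_sqrt_of_gap_profile {y f₀ α Δ l : ℝ} (hΔ : 0 ≤ Δ)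
    (hmid : |l - 1 / 2| ≤ f₀ * α → y = f₀) :
    f₀ * α * Δ ≤ √(((l * Δ - (1 - l) * Δ) / 2) ^ 2 + (y * Δ * α) ^ 2) := by
  rcases le_or_gt |l - 1 / 2| (f₀ * α) with h | h
  · calc f₀ * α * Δ = y * Δ * α := by rw [hmid h]; ring
      _ ≤ |y * Δ * α| := le_abs_self _
      _ ≤ _ := Real.abs_le_sqrt (by nlinarith)
  · calc f₀ * α * Δ ≤ |l - 1 / 2| * Δ := mul_le_mul_of_nonneg_right h.le hΔ
      _ = |(l * Δ - (1 - l) * Δ) / 2| := by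
        rw [show (l * Δ - (1 - l) * Δ) / 2 = (l - 1 / 2) * Δ by ring, abs_mul, abs_of_nonneg hΔ]
      _ ≤ _ := Real.abs_le_sqrt (by nlinarith)

end

/-- If `f` satisfies the gap-opening profile, then for every `λ ∈ [0,1]` the
spectral gap of `H̃(λ)` is at least `f₀αΔ`: if `ψ₀` is a unit eigenvector whose eigenvalue `E₀`
is the least eigenvalue, then every eigenvector of `H̃(λ)` orthogonal to `ψ₀` has eigenvalue
at least `E₀ + f₀αΔ`. -/
theorem gap_lemma_profile_gap
    {V : Type*} [NormedAddCommGroup V] [InnerProductSpace ℂ V] [FiniteDimensional ℂ V]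
    (Δ μ₀ f₀ : ℝ) (hΔ : 0 < Δ) (hμ₀ : 0 ≤ μ₀) (hμ₀' : μ₀ < 1)
    (hf₀ : f₀ = (1 - μ₀) / 10)
    (H₁ H₂ : V →ₗ[ℂ] V) (hH₁ : H₁.IsSymmetric) (hH₂ : H₂.IsSymmetric)
    (ξ₀ η₀ : V) (hξ : ‖ξ₀‖ = 1) (hη : ‖η₀‖ = 1)
    (hH₁ξ : H₁ ξ₀ = 0) (hH₂η : H₂ η₀ = 0)
    (hgap₁ : ∀ v : V, (inner ℂ ξ₀ v : ℂ) = 0 → Δ * ‖v‖ ^ 2 ≤ ((inner ℂ v (H₁ v) : ℂ)).re)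
    (hgap₂ : ∀ v : V, (inner ℂ η₀ v : ℂ) = 0 → Δ * ‖v‖ ^ 2 ≤ ((inner ℂ v (H₂ v) : ℂ)).re)
    (α : ℝ) (hα : (inner ℂ ξ₀ η₀ : ℂ) = (α : ℂ)) (hα' : 1 - μ₀ ≤ α)
    (f : ℝ → ℝ)
    (hfnonneg : ∀ l ∈ Set.Icc (0:ℝ) 1, 0 ≤ f l)
    (hfmid : ∀ l ∈ Set.Icc (0:ℝ) 1, |l - 1/2| ≤ f₀ * α → f l = f₀)
    (hfmed : ∀ l ∈ Set.Icc (0:ℝ) 1, f₀ * α < |l - 1/2| → |l - 1/2| ≤ 1/5 →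
      f₀ ^ 2 ≤ f l ∧ f l ≤ f₀)
    (hftail : ∀ l ∈ Set.Icc (0:ℝ) 1, 1/5 < |l - 1/2| → f l ≤ f₀ ^ 2) :
    ∀ l ∈ Set.Icc (0:ℝ) 1,
      ∀ T : WithLp 2 (V × V) →ₗ[ℂ] WithLp 2 (V × V),
        (∀ u w : V, T ((WithLp.equiv 2 (V × V)).symm (u, w)) =
          (WithLp.equiv 2 (V × V)).symm
            (H₁ u + ((l * Δ : ℝ) : ℂ) • u + ((f l * Δ : ℝ) : ℂ) • w,
             H₂ w + (((1 - l) * Δ : ℝ) : ℂ) • w + ((f l * Δ : ℝ) : ℂ) • u)) →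
        ∀ (E₀ : ℝ) (ψ₀ : WithLp 2 (V × V)), ‖ψ₀‖ = 1 → T ψ₀ = (E₀ : ℂ) • ψ₀ →
          (∀ (E : ℂ) (φ : WithLp 2 (V × V)), φ ≠ 0 → T φ = E • φ → E₀ ≤ E.re) →
          ∀ (E : ℂ) (φ : WithLp 2 (V × V)), φ ≠ 0 → (inner ℂ ψ₀ φ : ℂ) = 0 → T φ = E • φ →
            E₀ + f₀ * α * Δ ≤ E.re := by
  intro l hl T hT E₀ ψ₀ hψ₀ hTψ₀ hmin E φ hφ horth hTφ
  replace hT : IsCoupledSum H₁ H₂ (l * Δ) ((1 - l) * Δ) (f l * Δ) T := hT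
  have hf₀pos : 0 < f₀ := by rw [hf₀]; linarith
  have hf₀α : 10 * f₀ ≤ α := by rw [hf₀]; linarith
  have hf₀le : 10 * f₀ ≤ 1 := by rw [hf₀]; linarith
  have hfl₀ := hfnonneg l hl
  have hfl : f l ≤ f₀ :=
    le_of_gap_profile hf₀pos.le (by linarith) (hfmid l hl) (hfmed l hl) (hftail l hl)
  have hcr := mul_le_sqrt_of_gap_profile hΔ.le (hfmid l hl)
  set r := √(((l * Δ - (1 - l) * Δ) / 2) ^ 2 + (f l * Δ * α) ^ 2)
  obtain ⟨p, q, hpq, hground, hupper⟩ :=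
    exists_two_level_ground_state (l * Δ) ((1 - l) * Δ) (f l * Δ * α)
  rw [show (l * Δ + (1 - l) * Δ) / 2 = Δ / 2 by ring] at hground hupper
  -- variational principle for the trial vector `(pξ₀, qη₀)`
  have hE₀ : E₀ ≤ Δ / 2 - r := by
    have h := ((hT.isSymmetric hH₁ hH₂).mul_norm_sq_le_re_inner_apply hmin _).trans_eq
      (hT.re_inner_apply_toLp_smul_smul hξ hη hH₁ξ hH₂η hα p q)
    simpa [WithLp.prod_norm_sq_eq_of_L2, norm_smul, hξ, hη, hpq, hground] using h
  have hc : 0 < f₀ * α * Δ := mul_pos (mul_pos hf₀pos (by linarith)) hΔ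
  have hfl₂ : 10 * f l ^ 2 ≤ f₀ * α := by
    nlinarith [mul_le_mul hfl hfl hfl₀ hf₀pos.le, mul_le_mul_of_nonneg_left hf₀α hf₀pos.le]
  have hkey := hT.mul_norm_sq_le_re_inner_apply_of_inner_eq_zero hH₁ hH₂ hξ hη hH₁ξ hH₂η hgap₁
    hgap₂ hα (mul_nonneg hl.1 hΔ.le) (mul_nonneg (sub_nonneg.2 hl.2) hΔ.le) (by positivity)
    (by nlinarith) (c := f₀ * α * Δ) (by nlinarith [mul_le_mul_of_nonneg_right hfl₂ (sq_nonneg Δ)])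
    hc hcr hpq hupper
  have hmax := le_max_re_of_orthogonal_eigenvectors (by rintro rfl; simp at hψ₀) hφ horth hTψ₀ hTφ hkey
  simp only [RCLike.re_to_complex, Complex.ofReal_re] at hmax
  linarith [(le_max_iff.1 hmax).resolve_left (by linarith)]
end

section
/- Let λ ∈ [0,1] with |λ − 1/2| > 1/5 and suppose 0 ≤ f(λ) ≤ f₀². Then, writing E₀ for the least eigenvalue of H̃(λ), every eigenvector of H̃(λ) orthogonal to a unit eigenvector with eigenvalue E₀ has eigenvalue at least E₀ + f₀αΔ. -/
/-!
Assume `λ ≥ 7/10`; the case `λ ≤ 3/10` is its mirror image under swapping the two summands of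
`V ⊕ V`. The test vector `(0, η₀)` has energy `(1 - λ)Δ`, so `E₀ ≤ (1 - λ)Δ`. The first summand
costs at least `(2λ - 1)Δ ≥ 2Δ/5` more than the second, the second has gap `Δ` above `η₀`, and the
coupling is at most `Δ/100`; hence a ground state `(a, b)` has `‖a‖ ≤ 1/20` and the part of `b`
orthogonal to `η₀` has norm at most `1/20`. A vector orthogonal to the ground state can then have
only a small `η₀`-component, so almost all of its weight pays one of the two penalties, and its
energy is at least `(1 - λ)Δ + Δ/10 ≥ E₀ + f₀αΔ`.
-/

open RCLike ComplexConjugate Module.End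
open scoped InnerProductSpace

theorem LinearMap.IsSymmetric.mul_norm_sq_le_re_inner_apply_self {𝕜 E : Type*} [RCLike 𝕜]
    [NormedAddCommGroup E] [InnerProductSpace 𝕜 E] [FiniteDimensional 𝕜 E] {T : E →ₗ[𝕜] E}
    (hT : T.IsSymmetric) {c : ℝ} (hc : ∀ μ, HasEigenvalue T μ → c ≤ re μ) (x : E) :
    c * ‖x‖ ^ 2 ≤ re ⟪x, T x⟫_𝕜 := by
  rcases eq_or_ne x 0 with rfl | hx
  · simp
  have : Nontrivial E := ⟨⟨x, 0, hx⟩⟩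
  let T' := LinearMap.toContinuousLinearMap T
  have hbdd : BddBelow (Set.range fun y : {y : E // y ≠ 0} ↦ re ⟪T y, y⟫_𝕜 / ‖(y : E)‖ ^ 2) :=
    ⟨-‖T'‖, by rintro _ ⟨y, rfl⟩; exact neg_le_of_abs_le (T'.rayleighQuotient_le_norm y)⟩
  have hmin := hc _ hT.hasEigenvalue_iInf_of_finiteDimensional
  rw [ofReal_re] at hmin
  replace hmin := hmin.trans (ciInf_le hbdd ⟨x, hx⟩)
  rwa [le_div_iff₀ (by positivity), hT] at hmin

theorem LinearIsometryEquiv.inner_conj_apply_self {𝕜 E F : Type*} [RCLike 𝕜]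
    [NormedAddCommGroup E] [InnerProductSpace 𝕜 E] [NormedAddCommGroup F] [InnerProductSpace 𝕜 F]
    (e : E ≃ₗᵢ[𝕜] F) (T : E →ₗ[𝕜] E) (x : F) :
    ⟪x, e.toLinearEquiv.conj T x⟫_𝕜 = ⟪e.symm x, T (e.symm x)⟫_𝕜 := by
  rw [LinearEquiv.conj_apply, LinearMap.comp_apply, LinearMap.comp_apply, ← e.inner_map_map,
    LinearIsometryEquiv.apply_symm_apply]
  rfl

section

variable {𝕜 V : Type*} [RCLike 𝕜] [NormedAddCommGroup V] [InnerProductSpace 𝕜 V]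

variable (𝕜) in
def orthComponent (η w : V) : V := w - ⟪η, w⟫_𝕜 • η

section OrthComponent

variable {η : V} (hη : ‖η‖ = 1)
include hη

theorem inner_orthComponent_right (w : V) : ⟪η, orthComponent 𝕜 η w⟫_𝕜 = 0 := by
  simp [orthComponent, inner_sub_right, inner_smul_right, inner_self_eq_norm_sq_to_K, hη]

theorem inner_orthComponent_left (w : V) : ⟪orthComponent 𝕜 η w, η⟫_𝕜 = 0 :=
  inner_eq_zero_symm.mp (inner_orthComponent_right hη w)

theorem norm_sq_eq_norm_inner_sq_add_norm_orthComponent_sq (w : V) :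
    ‖w‖ ^ 2 = ‖⟪η, w⟫_𝕜‖ ^ 2 + ‖orthComponent 𝕜 η w‖ ^ 2 := by
  have h := norm_add_sq_eq_norm_sq_add_norm_sq_of_inner_eq_zero (⟪η, w⟫_𝕜 • η)
    (orthComponent 𝕜 η w) (by rw [inner_smul_left, inner_orthComponent_right hη, mul_zero])
  simpa only [sq, orthComponent, add_sub_cancel, norm_smul, hη, mul_one] using h

theorem inner_eq_conj_mul_add_inner_orthComponent (v w : V) :
    ⟪v, w⟫_𝕜 = conj ⟪η, v⟫_𝕜 * ⟪η, w⟫_𝕜 + ⟪orthComponent 𝕜 η v, orthComponent 𝕜 η w⟫_𝕜 := by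
  conv_lhs => rw [← sub_add_cancel v (⟪η, v⟫_𝕜 • η), ← sub_add_cancel w (⟪η, w⟫_𝕜 • η)]
  rw [← orthComponent, ← orthComponent, inner_add_left, inner_add_right, inner_add_right,
    inner_smul_left, inner_smul_right, inner_orthComponent_right hη, inner_smul_left,
    inner_smul_right, inner_orthComponent_left hη, inner_self_eq_norm_sq_to_K, hη]
  simp only [ofReal_one, one_pow, mul_one, mul_zero, add_zero, zero_add]
  ring

theorem norm_inner_mul_norm_inner_le_of_inner_eq_zero {ψ φ : WithLp 2 (V × V)}
    (hψφ : ⟪ψ, φ⟫_𝕜 = 0) :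
    ‖⟪η, ψ.snd⟫_𝕜‖ * ‖⟪η, φ.snd⟫_𝕜‖ ≤ ‖ψ.fst‖ * ‖φ.fst‖
      + ‖orthComponent 𝕜 η ψ.snd‖ * ‖orthComponent 𝕜 η φ.snd‖ := by
  rw [WithLp.prod_inner_apply, WithLp.ofLp_fst, WithLp.ofLp_snd, WithLp.ofLp_fst,
    WithLp.ofLp_snd, inner_eq_conj_mul_add_inner_orthComponent hη ψ.snd] at hψφ
  have h : conj ⟪η, ψ.snd⟫_𝕜 * ⟪η, φ.snd⟫_𝕜 =
      -(⟪ψ.fst, φ.fst⟫_𝕜 + ⟪orthComponent 𝕜 η ψ.snd, orthComponent 𝕜 η φ.snd⟫_𝕜) := by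
    linear_combination hψφ
  calc ‖⟪η, ψ.snd⟫_𝕜‖ * ‖⟪η, φ.snd⟫_𝕜‖
      = ‖⟪ψ.fst, φ.fst⟫_𝕜 + ⟪orthComponent 𝕜 η ψ.snd, orthComponent 𝕜 η φ.snd⟫_𝕜‖ := by
        rw [← RCLike.norm_conj ⟪η, ψ.snd⟫_𝕜, ← norm_mul, h, norm_neg]
    _ ≤ _ := (norm_add_le _ _).trans (add_le_add (norm_inner_le_norm _ _) (norm_inner_le_norm _ _))

end OrthComponent

structure HasGappedGroundState (H : V →ₗ[𝕜] V) (η : V) (Δ : ℝ) : Prop where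
  isSymmetric : H.IsSymmetric
  norm_eq_one : ‖η‖ = 1
  apply_eq_zero : H η = 0
  gap : ∀ v, ⟪η, v⟫_𝕜 = 0 → Δ * ‖v‖ ^ 2 ≤ re ⟪v, H v⟫_𝕜

namespace HasGappedGroundState

variable {H : V →ₗ[𝕜] V} {η : V} {Δ : ℝ}

theorem mul_norm_orthComponent_sq_le (h : HasGappedGroundState H η Δ) (w : V) :
    Δ * ‖orthComponent 𝕜 η w‖ ^ 2 ≤ re ⟪w, H w⟫_𝕜 := by
  have hHw : H w = H (orthComponent 𝕜 η w) := by
    rw [orthComponent, map_sub, map_smul, h.apply_eq_zero, smul_zero, sub_zero]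
  have hη : ⟪η, H (orthComponent 𝕜 η w)⟫_𝕜 = 0 := by
    rw [← h.isSymmetric, h.apply_eq_zero, inner_zero_left]
  have hw : ⟪w, H w⟫_𝕜 = ⟪orthComponent 𝕜 η w, H (orthComponent 𝕜 η w)⟫_𝕜 := by
    calc ⟪w, H w⟫_𝕜 = ⟪orthComponent 𝕜 η w + ⟪η, w⟫_𝕜 • η, H (orthComponent 𝕜 η w)⟫_𝕜 := by
          rw [← hHw, orthComponent, sub_add_cancel]
      _ = _ := by rw [inner_add_left, inner_smul_left, hη, mul_zero, add_zero]
  exact hw ▸ h.gap _ (inner_orthComponent_right h.norm_eq_one w)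

theorem re_inner_apply_self_nonneg (h : HasGappedGroundState H η Δ) (hΔ : 0 ≤ Δ) (w : V) :
    0 ≤ re ⟪w, H w⟫_𝕜 :=
  (by positivity : 0 ≤ Δ * ‖orthComponent 𝕜 η w‖ ^ 2).trans (h.mul_norm_orthComponent_sq_le w)

end HasGappedGroundState

/-- `H̃(λ)` is the case `p = λΔ`, `r = (1 - λ)Δ`, `q = f(λ)Δ`. -/
def IsCoupledOperator (T : WithLp 2 (V × V) →ₗ[𝕜] WithLp 2 (V × V)) (H₁ H₂ : V →ₗ[𝕜] V)
    (p r q : ℝ) : Prop :=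
  ∀ u w : V, T (WithLp.toLp 2 (u, w)) =
    WithLp.toLp 2 (H₁ u + (p : 𝕜) • u + (q : 𝕜) • w, H₂ w + (r : 𝕜) • w + (q : 𝕜) • u)

namespace IsCoupledOperator

variable {T : WithLp 2 (V × V) →ₗ[𝕜] WithLp 2 (V × V)} {H₁ H₂ : V →ₗ[𝕜] V} {p r q : ℝ}
  {ξ η : V} {Δ : ℝ}

theorem apply (hT : IsCoupledOperator T H₁ H₂ p r q) (ψ : WithLp 2 (V × V)) :
    T ψ = WithLp.toLp 2 (H₁ ψ.fst + (p : 𝕜) • ψ.fst + (q : 𝕜) • ψ.snd,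
      H₂ ψ.snd + (r : 𝕜) • ψ.snd + (q : 𝕜) • ψ.fst) :=
  hT ψ.fst ψ.snd

theorem re_inner_apply_self (hT : IsCoupledOperator T H₁ H₂ p r q) (ψ : WithLp 2 (V × V)) :
    re ⟪ψ, T ψ⟫_𝕜 = re ⟪ψ.fst, H₁ ψ.fst⟫_𝕜 + p * ‖ψ.fst‖ ^ 2
      + (re ⟪ψ.snd, H₂ ψ.snd⟫_𝕜 + r * ‖ψ.snd‖ ^ 2) + 2 * q * re ⟪ψ.fst, ψ.snd⟫_𝕜 := by
  rw [hT.apply, WithLp.prod_inner_apply]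
  simp only [WithLp.ofLp_fst, WithLp.ofLp_snd, inner_add_right, inner_smul_right, map_add,
    re_ofReal_mul, inner_self_eq_norm_sq, inner_re_symm ψ.snd ψ.fst]
  ring

theorem isSymmetric (hT : IsCoupledOperator T H₁ H₂ p r q) (h₁ : H₁.IsSymmetric)
    (h₂ : H₂.IsSymmetric) : T.IsSymmetric := by
  intro ψ χ
  rw [hT.apply, hT.apply, WithLp.prod_inner_apply, WithLp.prod_inner_apply]
  simp only [WithLp.ofLp_fst, WithLp.ofLp_snd, inner_add_left, inner_add_right, inner_smul_left,
    inner_smul_right, conj_ofReal, h₁ _ _, h₂ _ _]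
  ring

theorem conj_prodComm (hT : IsCoupledOperator T H₁ H₂ p r q) :
    IsCoupledOperator ((LinearIsometryEquiv.withLpProdComm 2 𝕜 V V).toLinearEquiv.conj T)
      H₂ H₁ r p q := by
  intro u w
  simp [LinearEquiv.conj_apply, hT w u]

theorem re_inner_apply_toLp_zero (hT : IsCoupledOperator T H₁ H₂ p r q) (hη : ‖η‖ = 1)
    (hH₂η : H₂ η = 0) :
    re ⟪WithLp.toLp 2 ((0 : V), η), T (WithLp.toLp 2 (0, η))⟫_𝕜 = r := by
  rw [hT.re_inner_apply_self]
  simp [hH₂η, hη]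

theorem le_re_inner_apply_self (hT : IsCoupledOperator T H₁ H₂ p r q)
    (h₁ : HasGappedGroundState H₁ ξ Δ) (h₂ : HasGappedGroundState H₂ η Δ) (hΔ : 0 ≤ Δ)
    (hq : 0 ≤ q) (ψ : WithLp 2 (V × V)) :
    p * ‖ψ.fst‖ ^ 2 + r * ‖ψ.snd‖ ^ 2 + Δ * ‖orthComponent 𝕜 η ψ.snd‖ ^ 2
      - 2 * q * (‖ψ.fst‖ * ‖ψ.snd‖) ≤ re ⟪ψ, T ψ⟫_𝕜 := by
  have hH₁ := h₁.re_inner_apply_self_nonneg hΔ ψ.fst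
  have hH₂ := h₂.mul_norm_orthComponent_sq_le ψ.snd
  have hcross : -(‖ψ.fst‖ * ‖ψ.snd‖) ≤ re ⟪ψ.fst, ψ.snd⟫_𝕜 := by
    have h := re_inner_le_norm (𝕜 := 𝕜) (-ψ.fst) ψ.snd
    rw [inner_neg_left, map_neg, norm_neg] at h
    linarith
  rw [hT.re_inner_apply_self]
  nlinarith [mul_le_mul_of_nonneg_left hcross (by positivity : (0 : ℝ) ≤ 2 * q)]

section Gap

variable (hT : IsCoupledOperator T H₁ H₂ p r q) (h₁ : HasGappedGroundState H₁ ξ Δ)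
  (h₂ : HasGappedGroundState H₂ η Δ) (hΔ : 0 < Δ) (hpr : 2 / 5 * Δ ≤ p - r) (hq : 0 ≤ q)
  (hqΔ : q ≤ Δ / 100)
include hT h₁ h₂ hΔ hpr hq hqΔ

theorem norm_fst_le_and_norm_orthComponent_snd_le {ψ : WithLp 2 (V × V)} (hψ : ‖ψ‖ = 1)
    (hψT : re ⟪ψ, T ψ⟫_𝕜 ≤ r) :
    ‖ψ.fst‖ ≤ 1 / 20 ∧ ‖orthComponent 𝕜 η ψ.snd‖ ≤ 1 / 20 := by
  have hlow := hT.le_re_inner_apply_self h₁ h₂ hΔ.le hq ψ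
  have hsum : ‖ψ.fst‖ ^ 2 + ‖ψ.snd‖ ^ 2 = 1 := by rw [← WithLp.prod_norm_sq_eq_of_L2, hψ, one_pow]
  set A := ‖ψ.fst‖
  set B := ‖ψ.snd‖
  set s := ‖orthComponent 𝕜 η ψ.snd‖
  have hA : 0 ≤ A := norm_nonneg _
  have hB : 0 ≤ B := norm_nonneg _
  have hB1 : B ≤ 1 := by nlinarith
  have hr : r = r * A ^ 2 + r * B ^ 2 := by rw [← mul_add, hsum, mul_one]
  have hloc : (p - r) * A ^ 2 + Δ * s ^ 2 ≤ Δ / 50 * A := by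
    nlinarith [mul_le_mul_of_nonneg_left hB1 (mul_nonneg hq hA)]
  have hA20 : A ≤ 1 / 20 := by
    by_contra! h
    nlinarith [sq_nonneg s, mul_le_mul_of_nonneg_right hpr (sq_nonneg A),
      mul_pos (mul_pos hΔ (by linarith : 0 < A)) (by linarith : 0 < A - 1 / 20)]
  refine ⟨hA20, ?_⟩
  have hs2 : s ^ 2 ≤ 1 / 400 := by nlinarith [mul_le_mul_of_nonneg_right hpr (sq_nonneg A)]
  nlinarith [norm_nonneg (orthComponent 𝕜 η ψ.snd)]

theorem add_div_ten_mul_norm_sq_le_of_inner_eq_zero {ψ φ : WithLp 2 (V × V)} (hψ : ‖ψ‖ = 1)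
    (hψT : re ⟪ψ, T ψ⟫_𝕜 ≤ r) (hψφ : ⟪ψ, φ⟫_𝕜 = 0) :
    (r + Δ / 10) * ‖φ‖ ^ 2 ≤ re ⟪φ, T φ⟫_𝕜 := by
  obtain ⟨hA, hs⟩ := hT.norm_fst_le_and_norm_orthComponent_snd_le h₁ h₂ hΔ hpr hq hqΔ hψ hψT
  have hlow := hT.le_re_inner_apply_self h₁ h₂ hΔ.le hq φ
  have hη := h₂.norm_eq_one
  have hψsum : ‖ψ.fst‖ ^ 2 + ‖ψ.snd‖ ^ 2 = 1 := by
    rw [← WithLp.prod_norm_sq_eq_of_L2, hψ, one_pow]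
  have hψsnd := norm_sq_eq_norm_inner_sq_add_norm_orthComponent_sq (𝕜 := 𝕜) hη ψ.snd
  have hφsnd := norm_sq_eq_norm_inner_sq_add_norm_orthComponent_sq (𝕜 := 𝕜) hη φ.snd
  have hbc := norm_inner_mul_norm_inner_le_of_inner_eq_zero hη hψφ
  rw [WithLp.prod_norm_sq_eq_of_L2]
  set A := ‖ψ.fst‖
  set s := ‖orthComponent 𝕜 η ψ.snd‖
  set b := ‖⟪η, ψ.snd⟫_𝕜‖
  set x := ‖φ.fst‖
  set W := ‖φ.snd‖
  set c := ‖⟪η, φ.snd⟫_𝕜‖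
  set t := ‖orthComponent 𝕜 η φ.snd‖
  have hA0 : 0 ≤ A := norm_nonneg _
  have hs0 : 0 ≤ s := norm_nonneg _
  have hx0 : 0 ≤ x := norm_nonneg _
  have ht0 : 0 ≤ t := norm_nonneg _
  have hb0 : 0 ≤ b := norm_nonneg _
  have hc0 : 0 ≤ c := norm_nonneg _
  have hb2 : 199 / 200 ≤ b ^ 2 := by nlinarith
  have hbc20 : b * c ≤ (x + t) / 20 := by
    nlinarith [mul_le_mul_of_nonneg_right hA hx0, mul_le_mul_of_nonneg_right hs ht0]
  -- the `η`-component `c` of `φ` is small, so `x ^ 2 + t ^ 2` is almost all of `‖φ‖ ^ 2`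
  have hc2 : c ^ 2 ≤ (x ^ 2 + t ^ 2) / 199 := by
    nlinarith [mul_le_mul_of_nonneg_right hb2 (sq_nonneg c), sq_nonneg (x - t),
      pow_le_pow_left₀ (mul_nonneg hb0 hc0) hbc20 2]
  have hcross : 2 * q * (x * W) ≤ q * (x ^ 2 + W ^ 2) := by
    nlinarith [mul_nonneg hq (sq_nonneg (x - W))]
  nlinarith [mul_le_mul_of_nonneg_right hpr (sq_nonneg x)]

theorem add_div_ten_mul_norm_sq_le {E₀ : ℝ} (hmin : ∀ χ, E₀ * ‖χ‖ ^ 2 ≤ re ⟪χ, T χ⟫_𝕜)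
    {ψ φ : WithLp 2 (V × V)} (hψ : ‖ψ‖ = 1) (hψT : re ⟪ψ, T ψ⟫_𝕜 ≤ E₀) (hψφ : ⟪ψ, φ⟫_𝕜 = 0) :
    (E₀ + Δ / 10) * ‖φ‖ ^ 2 ≤ re ⟪φ, T φ⟫_𝕜 := by
  have hE₀r : E₀ ≤ r := by
    have h := hmin (WithLp.toLp 2 (0, η))
    rwa [hT.re_inner_apply_toLp_zero h₂.norm_eq_one h₂.apply_eq_zero,
      WithLp.prod_norm_sq_eq_of_L2, WithLp.toLp_fst, WithLp.toLp_snd, norm_zero,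
      h₂.norm_eq_one, zero_pow two_ne_zero, one_pow, zero_add, mul_one] at h
  have h := hT.add_div_ten_mul_norm_sq_le_of_inner_eq_zero h₁ h₂ hΔ hpr hq hqΔ hψ
    (hψT.trans hE₀r) hψφ
  nlinarith [sq_nonneg ‖φ‖]

end Gap

theorem add_div_ten_mul_norm_sq_le_of_abs (hT : IsCoupledOperator T H₁ H₂ p r q)
    (h₁ : HasGappedGroundState H₁ ξ Δ) (h₂ : HasGappedGroundState H₂ η Δ) (hΔ : 0 < Δ)
    (hpr : 2 / 5 * Δ ≤ |p - r|) (hq : 0 ≤ q) (hqΔ : q ≤ Δ / 100) {E₀ : ℝ}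
    (hmin : ∀ χ, E₀ * ‖χ‖ ^ 2 ≤ re ⟪χ, T χ⟫_𝕜) {ψ φ : WithLp 2 (V × V)} (hψ : ‖ψ‖ = 1)
    (hψT : re ⟪ψ, T ψ⟫_𝕜 ≤ E₀) (hψφ : ⟪ψ, φ⟫_𝕜 = 0) :
    (E₀ + Δ / 10) * ‖φ‖ ^ 2 ≤ re ⟪φ, T φ⟫_𝕜 := by
  rcases le_abs'.mp hpr with hrp | hpr
  · set S := LinearIsometryEquiv.withLpProdComm 2 𝕜 V V
    have hST : ∀ χ, ⟪S χ, S.toLinearEquiv.conj T (S χ)⟫_𝕜 = ⟪χ, T χ⟫_𝕜 := fun χ ↦ by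
      rw [S.inner_conj_apply_self, S.symm_apply_apply]
    have hmin' : ∀ χ, E₀ * ‖χ‖ ^ 2 ≤ re ⟪χ, S.toLinearEquiv.conj T χ⟫_𝕜 := fun χ ↦ by
      rw [S.inner_conj_apply_self, ← S.symm.norm_map χ]
      exact hmin _
    have h := hT.conj_prodComm.add_div_ten_mul_norm_sq_le h₂ h₁ hΔ (by linarith) hq hqΔ hmin'
      (ψ := S ψ) (φ := S φ) (by rwa [S.norm_map]) (by rwa [hST]) (by rwa [S.inner_map_map])
    rwa [S.norm_map, hST] at h
  · exact hT.add_div_ten_mul_norm_sq_le h₁ h₂ hΔ hpr hq hqΔ hmin hψ hψT hψφ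

end IsCoupledOperator

end

theorem gap_lemma_outer_region_general
    {V : Type*} [NormedAddCommGroup V] [InnerProductSpace ℂ V] [FiniteDimensional ℂ V]
    (Δ μ₀ f₀ : ℝ) (hΔ : 0 < Δ) (hμ₀ : 0 ≤ μ₀) (hμ₀' : μ₀ < 1)
    (hf₀ : f₀ = (1 - μ₀) / 10)
    (H₁ H₂ : V →ₗ[ℂ] V) (hH₁ : H₁.IsSymmetric) (hH₂ : H₂.IsSymmetric)
    (ξ₀ η₀ : V) (hξ : ‖ξ₀‖ = 1) (hη : ‖η₀‖ = 1)
    (hH₁ξ : H₁ ξ₀ = 0) (hH₂η : H₂ η₀ = 0)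
    (hgap₁ : ∀ v : V, (inner ℂ ξ₀ v : ℂ) = 0 → Δ * ‖v‖ ^ 2 ≤ ((inner ℂ v (H₁ v) : ℂ)).re)
    (hgap₂ : ∀ v : V, (inner ℂ η₀ v : ℂ) = 0 → Δ * ‖v‖ ^ 2 ≤ ((inner ℂ v (H₂ v) : ℂ)).re)
    (α : ℝ) (hα : (inner ℂ ξ₀ η₀ : ℂ) = (α : ℂ))
    (f : ℝ → ℝ) (l : ℝ) (hl' : 1/5 < |l - 1/2|)
    (hfl : 0 ≤ f l) (hfl' : f l ≤ f₀ ^ 2)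
    (T : WithLp 2 (V × V) →ₗ[ℂ] WithLp 2 (V × V))
    (hT : ∀ u w : V, T ((WithLp.equiv 2 (V × V)).symm (u, w)) =
      (WithLp.equiv 2 (V × V)).symm
        (H₁ u + ((l * Δ : ℝ) : ℂ) • u + ((f l * Δ : ℝ) : ℂ) • w,
         H₂ w + (((1 - l) * Δ : ℝ) : ℂ) • w + ((f l * Δ : ℝ) : ℂ) • u))
    (E₀ : ℝ)
    (hE₀min : ∀ E : ℂ, Module.End.HasEigenvalue T E → E₀ ≤ E.re) :
    ∀ ψ₀ : WithLp 2 (V × V), ‖ψ₀‖ = 1 → T ψ₀ = (E₀ : ℂ) • ψ₀ →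
      ∀ (E : ℂ) (φ : WithLp 2 (V × V)), φ ≠ 0 → (inner ℂ ψ₀ φ : ℂ) = 0 → T φ = E • φ →
        E₀ + f₀ * α * Δ ≤ E.re := by
  intro ψ₀ hψ₀ hTψ₀ E φ hφ hψ₀φ hTφ
  have hT' : IsCoupledOperator T H₁ H₂ (l * Δ) ((1 - l) * Δ) (f l * Δ) := hT
  have h₁ : HasGappedGroundState H₁ ξ₀ Δ := ⟨hH₁, hξ, hH₁ξ, hgap₁⟩
  have h₂ : HasGappedGroundState H₂ η₀ Δ := ⟨hH₂, hη, hH₂η, hgap₂⟩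
  have hmin := (hT'.isSymmetric hH₁ hH₂).mul_norm_sq_le_re_inner_apply_self hE₀min
  have hpr : 2 / 5 * Δ ≤ |l * Δ - (1 - l) * Δ| := by
    rw [show l * Δ - (1 - l) * Δ = 2 * (l - 1 / 2) * Δ by ring, abs_mul, abs_mul, abs_two,
      abs_of_pos hΔ]
    nlinarith
  have hα1 : α ≤ 1 := by
    have h := norm_inner_le_norm (𝕜 := ℂ) ξ₀ η₀
    rw [hα, hξ, hη, Complex.norm_real, Real.norm_eq_abs, mul_one] at h
    exact (le_abs_self α).trans h
  have hf₀0 : 0 ≤ f₀ := by rw [hf₀]; linarith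
  have hf₀10 : f₀ ≤ 1 / 10 := by rw [hf₀]; linarith
  have hf₀α : f₀ * α ≤ 1 / 10 := (mul_le_of_le_one_right hf₀0 hα1).trans hf₀10
  have hq : f l * Δ ≤ Δ / 100 := by
    have hfl100 : f l ≤ 1 / 100 := hfl'.trans (by nlinarith)
    linarith [mul_le_mul_of_nonneg_right hfl100 hΔ.le]
  have key := hT'.add_div_ten_mul_norm_sq_le_of_abs h₁ h₂ hΔ hpr (by positivity)
    hq hmin hψ₀ (by simp [inner_product_apply_eigenvector hTψ₀, hψ₀]) hψ₀φ
  rw [inner_product_apply_eigenvector hTφ, ← ofReal_pow, re_mul_ofReal, re_to_complex] at key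
  linarith [le_of_mul_le_mul_right key (by positivity : 0 < ‖φ‖ ^ 2),
    mul_le_mul_of_nonneg_right hf₀α hΔ.le]

/-- For `λ ∈ [0,1]` with `|λ − 1/2| > 1/5` and `0 ≤ f(λ) ≤ f₀²`, writing `E₀`
for the least eigenvalue of `H̃(λ)`, every eigenvector of `H̃(λ)` orthogonal to a unit
eigenvector with eigenvalue `E₀` has eigenvalue at least `E₀ + f₀αΔ`. -/
theorem gap_lemma_outer_region
    {V : Type*} [NormedAddCommGroup V] [InnerProductSpace ℂ V] [FiniteDimensional ℂ V]
    (Δ μ₀ f₀ : ℝ) (hΔ : 0 < Δ) (hμ₀ : 0 ≤ μ₀) (hμ₀' : μ₀ < 1)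
    (hf₀ : f₀ = (1 - μ₀) / 10)
    (H₁ H₂ : V →ₗ[ℂ] V) (hH₁ : H₁.IsSymmetric) (hH₂ : H₂.IsSymmetric)
    (ξ₀ η₀ : V) (hξ : ‖ξ₀‖ = 1) (hη : ‖η₀‖ = 1)
    (hH₁ξ : H₁ ξ₀ = 0) (hH₂η : H₂ η₀ = 0)
    (hgap₁ : ∀ v : V, (inner ℂ ξ₀ v : ℂ) = 0 → Δ * ‖v‖ ^ 2 ≤ ((inner ℂ v (H₁ v) : ℂ)).re)
    (hgap₂ : ∀ v : V, (inner ℂ η₀ v : ℂ) = 0 → Δ * ‖v‖ ^ 2 ≤ ((inner ℂ v (H₂ v) : ℂ)).re)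
    (α : ℝ) (hα : (inner ℂ ξ₀ η₀ : ℂ) = (α : ℂ)) (hα' : 1 - μ₀ ≤ α)
    (f : ℝ → ℝ) (l : ℝ) (hl : l ∈ Set.Icc (0:ℝ) 1) (hl' : 1/5 < |l - 1/2|)
    (hfl : 0 ≤ f l) (hfl' : f l ≤ f₀ ^ 2)
    (T : WithLp 2 (V × V) →ₗ[ℂ] WithLp 2 (V × V))
    (hT : ∀ u w : V, T ((WithLp.equiv 2 (V × V)).symm (u, w)) =
      (WithLp.equiv 2 (V × V)).symm
        (H₁ u + ((l * Δ : ℝ) : ℂ) • u + ((f l * Δ : ℝ) : ℂ) • w,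
         H₂ w + (((1 - l) * Δ : ℝ) : ℂ) • w + ((f l * Δ : ℝ) : ℂ) • u))
    (E₀ : ℝ) (hE₀ : Module.End.HasEigenvalue T (E₀ : ℂ))
    (hE₀min : ∀ E : ℂ, Module.End.HasEigenvalue T E → E₀ ≤ E.re) :
    ∀ ψ₀ : WithLp 2 (V × V), ‖ψ₀‖ = 1 → T ψ₀ = (E₀ : ℂ) • ψ₀ →
      ∀ (E : ℂ) (φ : WithLp 2 (V × V)), φ ≠ 0 → (inner ℂ ψ₀ φ : ℂ) = 0 → T φ = E • φ →
        E₀ + f₀ * α * Δ ≤ E.re :=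
  gap_lemma_outer_region_general Δ μ₀ f₀ hΔ hμ₀ hμ₀' hf₀ H₁ H₂ hH₁ hH₂ ξ₀ η₀ hξ hη hH₁ξ hH₂η hgap₁
    hgap₂ α hα f l hl' hfl hfl' T hT E₀ hE₀min
end

section
/- Let λ ∈ [0,1] and suppose f(λ) ≥ 0. Then for every unit vector φ ∈ V ⊕ V orthogonal to both (ξ₀, 0) and (0, η₀), the expectation value satisfies ⟨φ, H̃(λ)φ⟩ ≥ (3/2 − |λ − 1/2| − f(λ))Δ. -/
/-!
Write `φ = (u, w)`. The orthogonality conditions put `u ⊥ ξ₀` and `w ⊥ η₀`, so the two gaps give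
`⟨u, H₁u⟩ + ⟨w, H₂w⟩ ≥ Δ(‖u‖² + ‖w‖²) = Δ`. The diagonal shifts contribute
`λΔ‖u‖² + (1−λ)Δ‖w‖² ≥ min(λ, 1−λ)Δ = (1/2 − |λ − 1/2|)Δ`, and the coupling contributes
`2f(λ)Δ Re⟨u, w⟩ ≥ −f(λ)Δ(‖u‖² + ‖w‖²) = −f(λ)Δ`.
-/

open scoped InnerProductSpace

lemma half_sub_abs_sub_half_le_convex_comb {l x y : ℝ} (hl : l ∈ Set.Icc (0 : ℝ) 1)
    (hx : 0 ≤ x) (hy : 0 ≤ y) (hxy : x + y = 1) :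
    1 / 2 - |l - 1 / 2| ≤ l * x + (1 - l) * y := by
  obtain ⟨hl0, hl1⟩ := hl
  rcases le_total l (1 / 2) with h | h
  · rw [abs_of_nonpos (by linarith)]
    nlinarith
  · rw [abs_of_nonneg (by linarith)]
    nlinarith

lemma neg_norm_sq_add_norm_sq_le_two_mul_re_inner {𝕜 E : Type*} [RCLike 𝕜]
    [NormedAddCommGroup E] [InnerProductSpace 𝕜 E] (u w : E) :
    -(‖u‖ ^ 2 + ‖w‖ ^ 2) ≤ 2 * RCLike.re ⟪u, w⟫_𝕜 := by
  have := norm_add_sq (𝕜 := 𝕜) u w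
  nlinarith [sq_nonneg ‖u + w‖]

lemma re_inner_toLp_coupled {V : Type*} [NormedAddCommGroup V] [InnerProductSpace ℂ V]
    (A B : V →ₗ[ℂ] V) (s t c : ℝ) (u w : V) :
    (⟪WithLp.toLp 2 (u, w),
        WithLp.toLp 2 (A u + (s : ℂ) • u + (c : ℂ) • w, B w + (t : ℂ) • w + (c : ℂ) • u)⟫_ℂ).re
      = (⟪u, A u⟫_ℂ).re + s * ‖u‖ ^ 2 + (⟪w, B w⟫_ℂ).re + t * ‖w‖ ^ 2
        + 2 * c * (⟪u, w⟫_ℂ).re := by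
  have hre : (⟪w, u⟫_ℂ).re = (⟪u, w⟫_ℂ).re := by
    rw [← inner_conj_symm u w, Complex.conj_re]
  have hself (v : V) : (⟪v, v⟫_ℂ).re = ‖v‖ ^ 2 := inner_self_eq_norm_sq (𝕜 := ℂ) v
  simp only [WithLp.prod_inner_apply, inner_add_right, inner_smul_right, Complex.add_re,
    Complex.mul_re, Complex.ofReal_re, Complex.ofReal_im, hre, hself]
  ring

theorem expectation_bound_orthogonal_complement_general
    {V : Type*} [NormedAddCommGroup V] [InnerProductSpace ℂ V]
    (Δ : ℝ) (hΔ : 0 < Δ)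
    (H₁ H₂ : V →ₗ[ℂ] V)
    (ξ₀ η₀ : V)
    (hgap₁ : ∀ v : V, (inner ℂ ξ₀ v : ℂ) = 0 → Δ * ‖v‖ ^ 2 ≤ ((inner ℂ v (H₁ v) : ℂ)).re)
    (hgap₂ : ∀ v : V, (inner ℂ η₀ v : ℂ) = 0 → Δ * ‖v‖ ^ 2 ≤ ((inner ℂ v (H₂ v) : ℂ)).re)
    (f : ℝ → ℝ) (l : ℝ) (hl : l ∈ Set.Icc (0:ℝ) 1) (hfl : 0 ≤ f l)
    (T : WithLp 2 (V × V) →ₗ[ℂ] WithLp 2 (V × V))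
    (hT : ∀ u w : V, T ((WithLp.equiv 2 (V × V)).symm (u, w)) =
      (WithLp.equiv 2 (V × V)).symm
        (H₁ u + ((l * Δ : ℝ) : ℂ) • u + ((f l * Δ : ℝ) : ℂ) • w,
         H₂ w + (((1 - l) * Δ : ℝ) : ℂ) • w + ((f l * Δ : ℝ) : ℂ) • u)) :
    ∀ φ : WithLp 2 (V × V), ‖φ‖ = 1 →
      (inner ℂ ((WithLp.equiv 2 (V × V)).symm (ξ₀, 0)) φ : ℂ) = 0 →
      (inner ℂ ((WithLp.equiv 2 (V × V)).symm (0, η₀)) φ : ℂ) = 0 →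
      (3/2 - |l - 1/2| - f l) * Δ ≤ ((inner ℂ φ (T φ) : ℂ)).re := by
  rintro ⟨u, w⟩ hφ h₁ h₂
  have hgu := hgap₁ u (by simpa [WithLp.prod_inner_apply] using h₁)
  have hgw := hgap₂ w (by simpa [WithLp.prod_inner_apply] using h₂)
  have hnorm : ‖u‖ ^ 2 + ‖w‖ ^ 2 = 1 := by
    simpa [hφ] using (WithLp.prod_norm_sq_eq_of_L2 (WithLp.toLp 2 (u, w))).symm
  have hshift := mul_le_mul_of_nonneg_left
    (half_sub_abs_sub_half_le_convex_comb hl (sq_nonneg _) (sq_nonneg _) hnorm) hΔ.le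
  have hcoupling := mul_le_mul_of_nonneg_left
    (neg_norm_sq_add_norm_sq_le_two_mul_re_inner (𝕜 := ℂ) u w) (mul_nonneg hfl hΔ.le)
  rw [RCLike.re_to_complex, hnorm] at hcoupling
  rw [← WithLp.equiv_symm_apply, hT, WithLp.equiv_symm_apply, re_inner_toLp_coupled]
  nlinarith

/-- For `λ ∈ [0,1]` with `f(λ) ≥ 0`, every unit vector `φ ∈ V ⊕ V` orthogonal to
both `(ξ₀, 0)` and `(0, η₀)` satisfies `⟨φ, H̃(λ)φ⟩ ≥ (3/2 − |λ − 1/2| − f(λ))Δ`. -/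
theorem expectation_bound_orthogonal_complement
    {V : Type*} [NormedAddCommGroup V] [InnerProductSpace ℂ V] [FiniteDimensional ℂ V]
    (Δ μ₀ f₀ : ℝ) (hΔ : 0 < Δ) (hμ₀ : 0 ≤ μ₀) (hμ₀' : μ₀ < 1)
    (hf₀ : f₀ = (1 - μ₀) / 10)
    (H₁ H₂ : V →ₗ[ℂ] V) (hH₁ : H₁.IsSymmetric) (hH₂ : H₂.IsSymmetric)
    (ξ₀ η₀ : V) (hξ : ‖ξ₀‖ = 1) (hη : ‖η₀‖ = 1)
    (hH₁ξ : H₁ ξ₀ = 0) (hH₂η : H₂ η₀ = 0)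
    (hgap₁ : ∀ v : V, (inner ℂ ξ₀ v : ℂ) = 0 → Δ * ‖v‖ ^ 2 ≤ ((inner ℂ v (H₁ v) : ℂ)).re)
    (hgap₂ : ∀ v : V, (inner ℂ η₀ v : ℂ) = 0 → Δ * ‖v‖ ^ 2 ≤ ((inner ℂ v (H₂ v) : ℂ)).re)
    (α : ℝ) (hα : (inner ℂ ξ₀ η₀ : ℂ) = (α : ℂ)) (hα' : 1 - μ₀ ≤ α)
    (f : ℝ → ℝ) (l : ℝ) (hl : l ∈ Set.Icc (0:ℝ) 1) (hfl : 0 ≤ f l)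
    (T : WithLp 2 (V × V) →ₗ[ℂ] WithLp 2 (V × V))
    (hT : ∀ u w : V, T ((WithLp.equiv 2 (V × V)).symm (u, w)) =
      (WithLp.equiv 2 (V × V)).symm
        (H₁ u + ((l * Δ : ℝ) : ℂ) • u + ((f l * Δ : ℝ) : ℂ) • w,
         H₂ w + (((1 - l) * Δ : ℝ) : ℂ) • w + ((f l * Δ : ℝ) : ℂ) • u)) :
    ∀ φ : WithLp 2 (V × V), ‖φ‖ = 1 →
      (inner ℂ ((WithLp.equiv 2 (V × V)).symm (ξ₀, 0)) φ : ℂ) = 0 →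
      (inner ℂ ((WithLp.equiv 2 (V × V)).symm (0, η₀)) φ : ℂ) = 0 →
      (3/2 - |l - 1/2| - f l) * Δ ≤ ((inner ℂ φ (T φ) : ℂ)).re :=
  expectation_bound_orthogonal_complement_general Δ hΔ H₁ H₂ ξ₀ η₀ hgap₁ hgap₂ f l hl hfl T hT
end

section
/- The least eigenvalue E₀ of H satisfies E₀ ≤ ω₋, and for every unit eigenvector Ψ₀ of H with eigenvalue E₀, the weight of Ψ₀ outside the line spanned by v obeys 1 − |⟨v, Ψ₀⟩|² ≤ 4b²/((ω₊ − ω₋)² + 4b²). -/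
/-!
Write the ground state as `Ψ₀ = α • v + φ` with `φ ⊥ v`, so `|α|² + ‖φ‖² = 1`. Its energy
`E₀ = ⟪Ψ₀, H Ψ₀⟫` is at least `|α|² ω₋ - 2 |α| b ‖φ‖ + ω₊ ‖φ‖²`, while `E₀ ≤ ⟪v, H v⟫ = ω₋` since
the least eigenvalue bounds every Rayleigh quotient from below. Comparing the two gives
`(ω₊ - ω₋) ‖φ‖ ≤ 2 b |α|`; squaring and using `|α|² = 1 - ‖φ‖²` yields the bound on `‖φ‖²`.
-/

open RCLike

section InnerProductSpace

variable {𝕜 E : Type*} [RCLike 𝕜] [NormedAddCommGroup E] [InnerProductSpace 𝕜 E]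

theorem inner_sub_inner_smul_self_eq_zero {v : E} (hv : ‖v‖ = 1) (x : E) :
    inner 𝕜 v (x - inner 𝕜 v x • v) = 0 := by
  rw [inner_sub_right, inner_smul_right, inner_self_eq_norm_sq_to_K, hv]
  simp

theorem norm_inner_sq_add_norm_sub_sq_eq {v : E} (hv : ‖v‖ = 1) (x : E) :
    ‖inner 𝕜 v x‖ ^ 2 + ‖x - inner 𝕜 v x • v‖ ^ 2 = ‖x‖ ^ 2 := by
  have h := norm_add_sq_eq_norm_sq_add_norm_sq_of_inner_eq_zero (inner 𝕜 v x • v)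
    (x - inner 𝕜 v x • v) (by rw [inner_smul_left, inner_sub_inner_smul_self_eq_zero hv, mul_zero])
  rw [add_sub_cancel, norm_smul, hv, mul_one] at h
  simp only [sq]
  exact h.symm

theorem neg_norm_mul_norm_le_re_inner_smul_left (α : 𝕜) (x y : E) :
    -(‖α‖ * ‖inner 𝕜 x y‖) ≤ re (inner 𝕜 (α • x) y) := by
  rw [inner_smul_left, ← norm_conj α, ← norm_mul]
  exact neg_le_of_abs_le (abs_re_le_norm _)

namespace LinearMap

theorem re_inner_smul_map_smul (T : E →ₗ[𝕜] E) (α : 𝕜) (x : E) :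
    re (inner 𝕜 (α • x) (T (α • x))) = ‖α‖ ^ 2 * re (inner 𝕜 x (T x)) := by
  rw [map_smul, inner_smul_left, inner_smul_right, ← mul_assoc, RCLike.conj_mul, ← ofReal_pow,
    re_ofReal_mul]

theorem bddBelow_rayleigh [FiniteDimensional 𝕜 E] (T : E →ₗ[𝕜] E) :
    BddBelow (Set.range fun x : { x : E // x ≠ 0 } ↦
      re (inner 𝕜 (T x) (x : E)) / ‖(x : E)‖ ^ 2) := by
  refine ⟨-‖T.toContinuousLinearMap‖, ?_⟩
  rintro _ ⟨x, rfl⟩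
  exact (abs_le.mp (T.toContinuousLinearMap.rayleighQuotient_le_norm x)).1

namespace IsSymmetric

variable {T : E →ₗ[𝕜] E}

theorem re_inner_map_self_add (hT : T.IsSymmetric) (x y : E) :
    re (inner 𝕜 (x + y) (T (x + y))) =
      re (inner 𝕜 x (T x)) + 2 * re (inner 𝕜 x (T y)) + re (inner 𝕜 y (T y)) := by
  have hsym : re (inner 𝕜 y (T x)) = re (inner 𝕜 x (T y)) := by
    rw [← hT, ← inner_conj_symm, conj_re]
  simp only [map_add, inner_add_left, inner_add_right, hsym]
  ring

theorem le_re_inner_map_self_smul_add (hT : T.IsSymmetric) (α : 𝕜) (x y : E) :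
    ‖α‖ ^ 2 * re (inner 𝕜 x (T x)) - 2 * (‖α‖ * ‖inner 𝕜 x (T y)‖) + re (inner 𝕜 y (T y)) ≤
      re (inner 𝕜 (α • x + y) (T (α • x + y))) := by
  rw [hT.re_inner_map_self_add, T.re_inner_smul_map_smul]
  linarith [neg_norm_mul_norm_le_re_inner_smul_left α x (T y)]

theorem mul_norm_sq_le_re_inner_map_self [FiniteDimensional 𝕜 E] (hT : T.IsSymmetric) {c : ℝ}
    (hc : ∀ μ : 𝕜, Module.End.HasEigenvalue T μ → c ≤ re μ) (x : E) :
    c * ‖x‖ ^ 2 ≤ re (inner 𝕜 x (T x)) := by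
  rcases eq_or_ne x 0 with rfl | hx
  · simp
  have : Nontrivial E := ⟨⟨x, 0, hx⟩⟩
  have hinf := hc _ hT.hasEigenvalue_iInf_of_finiteDimensional
  rw [ofReal_re] at hinf
  have hle : c ≤ re (inner 𝕜 (T x) x) / ‖x‖ ^ 2 :=
    hinf.trans (ciInf_le (bddBelow_rayleigh T) ⟨x, hx⟩)
  rwa [le_div_iff₀ (by positivity), hT] at hle

end IsSymmetric

end LinearMap

end InnerProductSpace

theorem sq_mul_le_of_mul_sq_le {a b f Δ : ℝ} (hf : 0 ≤ f) (hΔ : 0 ≤ Δ)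
    (h : Δ * f ^ 2 ≤ 2 * a * b * f) :
    f ^ 2 * (Δ ^ 2 + 4 * b ^ 2) ≤ 4 * b ^ 2 * (a ^ 2 + f ^ 2) := by
  rcases hf.eq_or_lt with rfl | hf
  · nlinarith [sq_nonneg (a * b)]
  have hlin : Δ * f ≤ 2 * a * b := le_of_mul_le_mul_right (by linarith) hf
  nlinarith [mul_self_le_mul_self (by positivity) hlin]

theorem ground_state_weight_bound_general
    {V : Type*} [NormedAddCommGroup V] [InnerProductSpace ℂ V] [FiniteDimensional ℂ V]
    (H : V →ₗ[ℂ] V) (hH : H.IsSymmetric)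
    (v : V) (hv : ‖v‖ = 1)
    (ωm ωp b : ℝ) (hω : ωm < ωp)
    (hdiag : (inner ℂ v (H v) : ℂ) = (ωm : ℂ))
    (hperp : ∀ φ : V, (inner ℂ v φ : ℂ) = 0 → ωp * ‖φ‖ ^ 2 ≤ ((inner ℂ φ (H φ) : ℂ)).re)
    (hoff : ∀ φ : V, (inner ℂ v φ : ℂ) = 0 → ‖(inner ℂ v (H φ) : ℂ)‖ ≤ b * ‖φ‖)
    (E₀ : ℝ)
    (hE₀min : ∀ E : ℂ, Module.End.HasEigenvalue H E → E₀ ≤ E.re) :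
    E₀ ≤ ωm ∧
    ∀ Ψ₀ : V, ‖Ψ₀‖ = 1 → H Ψ₀ = (E₀ : ℂ) • Ψ₀ →
      1 - ‖(inner ℂ v Ψ₀ : ℂ)‖ ^ 2 ≤ 4 * b ^ 2 / ((ωp - ωm) ^ 2 + 4 * b ^ 2) := by
  have hground : E₀ ≤ ωm := by
    simpa [hv, hdiag] using hH.mul_norm_sq_le_re_inner_map_self hE₀min v
  refine ⟨hground, fun Ψ₀ hΨ₀ hHΨ₀ => ?_⟩
  set α := inner ℂ v Ψ₀
  set φ := Ψ₀ - α • v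
  have hφ : inner ℂ v φ = 0 := inner_sub_inner_smul_self_eq_zero hv Ψ₀
  have hweight : ‖α‖ ^ 2 + ‖φ‖ ^ 2 = 1 := by
    rw [norm_inner_sq_add_norm_sub_sq_eq hv, hΨ₀, one_pow]
  have henergy : (inner ℂ Ψ₀ (H Ψ₀)).re = E₀ := by
    simp [hHΨ₀, inner_self_eq_norm_sq_to_K, hΨ₀]
  have hlower := hH.le_re_inner_map_self_smul_add α v φ
  rw [add_sub_cancel] at hlower
  simp only [re_to_complex, hdiag, henergy, Complex.ofReal_re] at hlower
  have hgap : (ωp - ωm) * ‖φ‖ ^ 2 ≤ 2 * ‖α‖ * b * ‖φ‖ := by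
    linear_combination hperp φ hφ + hlower + hground +
      2 * mul_le_mul_of_nonneg_left (hoff φ hφ) (norm_nonneg α) - ωm * hweight
  have hbound := sq_mul_le_of_mul_sq_le (norm_nonneg φ) (sub_nonneg.2 hω.le) hgap
  rw [hweight] at hbound
  rw [← hweight, add_sub_cancel_left, le_div_iff₀ (by positivity)]
  linarith

/-- The least eigenvalue `E₀` of `H` satisfies `E₀ ≤ ω₋`, and for every unit
eigenvector `Ψ₀` of `H` with eigenvalue `E₀`, the weight of `Ψ₀` outside the line spanned by
`v` obeys `1 − |⟨v, Ψ₀⟩|² ≤ 4b²/((ω₊ − ω₋)² + 4b²)`. Here `ωm = ω₋`, `ωp = ω₊`. -/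
theorem ground_state_weight_bound
    {V : Type*} [NormedAddCommGroup V] [InnerProductSpace ℂ V] [FiniteDimensional ℂ V]
    (H : V →ₗ[ℂ] V) (hH : H.IsSymmetric)
    (v : V) (hv : ‖v‖ = 1)
    (ωm ωp b : ℝ) (hω : ωm < ωp) (hb : 0 ≤ b)
    (hdiag : (inner ℂ v (H v) : ℂ) = (ωm : ℂ))
    (hperp : ∀ φ : V, (inner ℂ v φ : ℂ) = 0 → ωp * ‖φ‖ ^ 2 ≤ ((inner ℂ φ (H φ) : ℂ)).re)
    (hoff : ∀ φ : V, (inner ℂ v φ : ℂ) = 0 → ‖(inner ℂ v (H φ) : ℂ)‖ ≤ b * ‖φ‖)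
    (E₀ : ℝ) (hE₀ : Module.End.HasEigenvalue H (E₀ : ℂ))
    (hE₀min : ∀ E : ℂ, Module.End.HasEigenvalue H E → E₀ ≤ E.re) :
    E₀ ≤ ωm ∧
    ∀ Ψ₀ : V, ‖Ψ₀‖ = 1 → H Ψ₀ = (E₀ : ℂ) • Ψ₀ →
      1 - ‖(inner ℂ v Ψ₀ : ℂ)‖ ^ 2 ≤ 4 * b ^ 2 / ((ωp - ωm) ^ 2 + 4 * b ^ 2) :=
  ground_state_weight_bound_general H hH v hv ωm ωp b hω hdiag hperp hoff E₀ hE₀min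
end

section
/- Let Ψ₀ be a unit eigenvector of H with eigenvalue E₀ (the least eigenvalue), and let Ψ₁ be a unit eigenvector of H orthogonal to Ψ₀ with eigenvalue E₁. Then E₁ − E₀ ≥ (ω₊ − ω₋)³/((ω₊ − ω₋)² + 4b²) − b. -/
/-!
Write every vector as `x = ⟪v, x⟫ • v + x'` with `x' ⟂ v`. The hypotheses bound `re ⟪x, H x⟫`
below by the two-level form `ω₋ a² + ω₊ r² - 2 b a r` in `a = ‖⟪v, x⟫‖`, `r = ‖x'‖`, while the
variational principle gives `E₀ ≤ ω₋`. Hence the ground state leans on `v`: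
`(ω₊ - ω₋) r₀ ≤ 2 b a₀`. Orthogonality gives `a₀ a₁ ≤ r₀ r₁`, so the excited state leans away
from `v`: `(ω₊ - ω₋) a₁ ≤ 2 b r₁`, i.e. `r₁² ≥ (ω₊ - ω₋)² / ((ω₊ - ω₋)² + 4 b²)`. Finally
`E₁ ≥ ω₋ + (ω₊ - ω₋) r₁² - b` since `2 a₁ r₁ ≤ 1`.
-/

open scoped ComplexConjugate InnerProductSpace
open RCLike

section

variable {𝕜 E : Type*} [RCLike 𝕜] [NormedAddCommGroup E] [InnerProductSpace 𝕜 E]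

theorem inner_sub_inner_smul_eq_zero {v : E} (hv : ‖v‖ = 1) (x : E) :
    ⟪v, x - ⟪v, x⟫_𝕜 • v⟫_𝕜 = 0 := by
  rw [inner_sub_right, inner_smul_right, inner_self_eq_one_of_norm_eq_one hv, mul_one, sub_self]

theorem inner_eq_conj_mul_add_inner_sub {v : E} (hv : ‖v‖ = 1) (x y : E) :
    ⟪x, y⟫_𝕜 = conj ⟪v, x⟫_𝕜 * ⟪v, y⟫_𝕜 + ⟪x - ⟪v, x⟫_𝕜 • v, y - ⟪v, y⟫_𝕜 • v⟫_𝕜 := by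
  have hvy := inner_sub_inner_smul_eq_zero (𝕜 := 𝕜) hv y
  have hxv : ⟪x - ⟪v, x⟫_𝕜 • v, v⟫_𝕜 = 0 := by
    rw [← inner_conj_symm, inner_sub_inner_smul_eq_zero hv, map_zero]
  conv_lhs => rw [← sub_add_cancel x (⟪v, x⟫_𝕜 • v), ← sub_add_cancel y (⟪v, y⟫_𝕜 • v)]
  rw [inner_add_left, inner_add_right, inner_add_right, inner_smul_left, inner_smul_right,
    inner_smul_right, inner_smul_left, inner_self_eq_one_of_norm_eq_one hv, hvy, hxv]
  ring

theorem norm_sq_eq_norm_inner_sq_add_norm_sub_sq {v : E} (hv : ‖v‖ = 1) (x : E) :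
    ‖x‖ ^ 2 = ‖⟪v, x⟫_𝕜‖ ^ 2 + ‖x - ⟪v, x⟫_𝕜 • v‖ ^ 2 := by
  have h := congrArg re (inner_eq_conj_mul_add_inner_sub (𝕜 := 𝕜) hv x x)
  rwa [inner_self_eq_norm_sq, map_add, inner_self_eq_norm_sq, RCLike.conj_mul, ← ofReal_pow,
    ofReal_re] at h

theorem norm_inner_mul_le_of_inner_eq_zero {v x y : E} (hv : ‖v‖ = 1) (hxy : ⟪x, y⟫_𝕜 = 0) :
    ‖⟪v, x⟫_𝕜‖ * ‖⟪v, y⟫_𝕜‖ ≤ ‖x - ⟪v, x⟫_𝕜 • v‖ * ‖y - ⟪v, y⟫_𝕜 • v‖ := by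
  rw [inner_eq_conj_mul_add_inner_sub hv, add_eq_zero_iff_eq_neg] at hxy
  calc ‖⟪v, x⟫_𝕜‖ * ‖⟪v, y⟫_𝕜‖ = ‖conj ⟪v, x⟫_𝕜 * ⟪v, y⟫_𝕜‖ := by rw [norm_mul, norm_conj]
    _ = ‖⟪x - ⟪v, x⟫_𝕜 • v, y - ⟪v, y⟫_𝕜 • v⟫_𝕜‖ := by rw [hxy, norm_neg]
    _ ≤ _ := norm_inner_le_norm _ _

theorem LinearMap.IsSymmetric.re_inner_map_smul_add {T : E →ₗ[𝕜] E} (hT : T.IsSymmetric)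
    (c : 𝕜) (v φ : E) :
    re ⟪c • v + φ, T (c • v + φ)⟫_𝕜
      = ‖c‖ ^ 2 * re ⟪v, T v⟫_𝕜 + 2 * re (conj c * ⟪v, T φ⟫_𝕜) + re ⟪φ, T φ⟫_𝕜 := by
  have hφv : ⟪φ, T v⟫_𝕜 = conj ⟪v, T φ⟫_𝕜 := by rw [← hT, inner_conj_symm]
  have hcross : re (c * conj ⟪v, T φ⟫_𝕜) = re (conj c * ⟪v, T φ⟫_𝕜) := by
    rw [← conj_re, map_mul, conj_conj]
  have hexp : ⟪c • v + φ, T (c • v + φ)⟫_𝕜 = (‖c‖ : 𝕜) ^ 2 * ⟪v, T v⟫_𝕜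
      + (c * conj ⟪v, T φ⟫_𝕜 + conj c * ⟪v, T φ⟫_𝕜) + ⟪φ, T φ⟫_𝕜 := by
    simp only [map_add, map_smul, inner_add_left, inner_add_right, inner_smul_left,
      inner_smul_right, hφv, ← RCLike.conj_mul]
    ring
  rw [hexp, map_add, map_add, map_add, ← ofReal_pow, re_ofReal_mul, hcross]
  ring

theorem LinearMap.IsSymmetric.le_re_inner_map_smul_add {T : E →ₗ[𝕜] E} (hT : T.IsSymmetric)
    {v φ : E} {ωm ωp b : ℝ} (hv : ωm ≤ re ⟪v, T v⟫_𝕜) (hφ : ωp * ‖φ‖ ^ 2 ≤ re ⟪φ, T φ⟫_𝕜)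
    (hvφ : ‖⟪v, T φ⟫_𝕜‖ ≤ b * ‖φ‖) (c : 𝕜) :
    ωm * ‖c‖ ^ 2 + ωp * ‖φ‖ ^ 2 - 2 * b * ‖c‖ * ‖φ‖ ≤ re ⟪c • v + φ, T (c • v + φ)⟫_𝕜 := by
  have hcross : -(‖c‖ * (b * ‖φ‖)) ≤ re (conj c * ⟪v, T φ⟫_𝕜) := by
    refine neg_le_of_abs_le ((abs_re_le_norm _).trans ?_)
    rw [norm_mul, norm_conj]
    exact mul_le_mul_of_nonneg_left hvφ (norm_nonneg c)
  rw [hT.re_inner_map_smul_add]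
  nlinarith [mul_le_mul_of_nonneg_left hv (sq_nonneg ‖c‖)]

theorem LinearMap.IsSymmetric.exists_hasEigenvalue_le_re_inner [FiniteDimensional 𝕜 E]
    {T : E →ₗ[𝕜] E} (hT : T.IsSymmetric) {x : E} (hx : ‖x‖ = 1) :
    ∃ μ : ℝ, Module.End.HasEigenvalue T μ ∧ μ ≤ re ⟪x, T x⟫_𝕜 := by
  have hx0 : x ≠ 0 := norm_ne_zero_iff.mp (by rw [hx]; exact one_ne_zero)
  have : Nontrivial E := ⟨x, 0, hx0⟩
  refine ⟨_, hT.hasEigenvalue_iInf_of_finiteDimensional, ?_⟩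
  have hbdd :
      BddBelow (Set.range fun y : { y : E // y ≠ 0 } ↦ re ⟪T y, y⟫_𝕜 / ‖(y : E)‖ ^ 2) := by
    refine ⟨-‖LinearMap.toContinuousLinearMap T‖, ?_⟩
    rintro _ ⟨y, rfl⟩
    exact neg_le_of_abs_le ((LinearMap.toContinuousLinearMap T).rayleighQuotient_le_norm y)
  calc _ ≤ re ⟪T x, x⟫_𝕜 / ‖x‖ ^ 2 := ciInf_le hbdd ⟨x, hx0⟩
    _ = re ⟪x, T x⟫_𝕜 := by rw [hT, hx, one_pow, div_one]

theorem re_inner_map_self_of_eq_smul {T : E →ₗ[𝕜] E} {x : E} {μ : ℝ} (hx : ‖x‖ = 1)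
    (hTx : T x = (μ : 𝕜) • x) : re ⟪x, T x⟫_𝕜 = μ := by
  rw [hTx, inner_smul_right, inner_self_eq_one_of_norm_eq_one hx, mul_one, ofReal_re]

theorem LinearMap.IsSymmetric.le_re_inner_map_self {T : E →ₗ[𝕜] E} (hT : T.IsSymmetric)
    {v : E} (hv : ‖v‖ = 1) {ωm ωp b : ℝ} (hdiag : ωm ≤ re ⟪v, T v⟫_𝕜)
    (hperp : ∀ φ : E, ⟪v, φ⟫_𝕜 = 0 → ωp * ‖φ‖ ^ 2 ≤ re ⟪φ, T φ⟫_𝕜)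
    (hoff : ∀ φ : E, ⟪v, φ⟫_𝕜 = 0 → ‖⟪v, T φ⟫_𝕜‖ ≤ b * ‖φ‖) (x : E) :
    ωm * ‖⟪v, x⟫_𝕜‖ ^ 2 + ωp * ‖x - ⟪v, x⟫_𝕜 • v‖ ^ 2
      - 2 * b * ‖⟪v, x⟫_𝕜‖ * ‖x - ⟪v, x⟫_𝕜 • v‖ ≤ re ⟪x, T x⟫_𝕜 := by
  have hφ := inner_sub_inner_smul_eq_zero (𝕜 := 𝕜) hv x
  simpa only [add_sub_cancel] using
    hT.le_re_inner_map_smul_add hdiag (hperp _ hφ) (hoff _ hφ) ⟪v, x⟫_𝕜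

end

theorem gap_lower_bound_of_overlaps {ωm ωp b E₀ E₁ a₀ r₀ a₁ r₁ : ℝ} (hω : ωm < ωp) (hb : 0 ≤ b)
    (ha₀ : 0 ≤ a₀) (hr₀ : 0 ≤ r₀) (ha₁ : 0 ≤ a₁) (hr₁ : 0 ≤ r₁)
    (hn₀ : a₀ ^ 2 + r₀ ^ 2 = 1) (hn₁ : a₁ ^ 2 + r₁ ^ 2 = 1)
    (hE₀ : ωm * a₀ ^ 2 + ωp * r₀ ^ 2 - 2 * b * a₀ * r₀ ≤ E₀) (hE₀ωm : E₀ ≤ ωm)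
    (hE₁ : ωm * a₁ ^ 2 + ωp * r₁ ^ 2 - 2 * b * a₁ * r₁ ≤ E₁) (horth : a₀ * a₁ ≤ r₀ * r₁) :
    (ωp - ωm) ^ 3 / ((ωp - ωm) ^ 2 + 4 * b ^ 2) - b ≤ E₁ - E₀ := by
  have hδ : 0 < ωp - ωm := sub_pos.2 hω
  have hground : (ωp - ωm) * r₀ ≤ 2 * b * a₀ := by
    rcases hr₀.eq_or_lt with h | h
    · rw [← h, mul_zero]; positivity
    · exact le_of_mul_le_mul_right (by linear_combination hE₀ + hE₀ωm - ωm * hn₀) h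
  have ha₀pos : 0 < a₀ := by
    refine ha₀.lt_of_ne' fun h ↦ ?_
    subst h
    have : r₀ ≤ 0 := nonpos_of_mul_nonpos_right (by linarith) hδ
    nlinarith
  have hexcited : (ωp - ωm) * a₁ ≤ 2 * b * r₁ := by
    refine le_of_mul_le_mul_left ?_ ha₀pos
    nlinarith [mul_le_mul_of_nonneg_left horth hδ.le, mul_le_mul_of_nonneg_right hground hr₁]
  have hweight : (ωp - ωm) ^ 2 ≤ ((ωp - ωm) ^ 2 + 4 * b ^ 2) * r₁ ^ 2 := by
    nlinarith [mul_self_le_mul_self (by positivity) hexcited]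
  have hgap : (ωp - ωm) ^ 3 / ((ωp - ωm) ^ 2 + 4 * b ^ 2) ≤ (ωp - ωm) * r₁ ^ 2 := by
    rw [div_le_iff₀ (by positivity)]
    nlinarith [mul_le_mul_of_nonneg_left hweight hδ.le]
  linear_combination hE₁ + hE₀ωm + hgap + (b - ωm) * hn₁ + mul_nonneg hb (sq_nonneg (a₁ - r₁))

theorem spectral_gap_lower_bound_general
    {V : Type*} [NormedAddCommGroup V] [InnerProductSpace ℂ V] [FiniteDimensional ℂ V]
    (H : V →ₗ[ℂ] V) (hH : H.IsSymmetric)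
    (v : V) (hv : ‖v‖ = 1)
    (ωm ωp b : ℝ) (hω : ωm < ωp) (hb : 0 ≤ b)
    (hdiag : (inner ℂ v (H v) : ℂ) = (ωm : ℂ))
    (hperp : ∀ φ : V, (inner ℂ v φ : ℂ) = 0 → ωp * ‖φ‖ ^ 2 ≤ ((inner ℂ φ (H φ) : ℂ)).re)
    (hoff : ∀ φ : V, (inner ℂ v φ : ℂ) = 0 → ‖(inner ℂ v (H φ) : ℂ)‖ ≤ b * ‖φ‖)
    (E₀ : ℝ)
    (hE₀min : ∀ E : ℂ, Module.End.HasEigenvalue H E → E₀ ≤ E.re)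
    (Ψ₀ Ψ₁ : V) (E₁ : ℝ)
    (hΨ₀norm : ‖Ψ₀‖ = 1) (hΨ₀ : H Ψ₀ = (E₀ : ℂ) • Ψ₀)
    (hΨ₁norm : ‖Ψ₁‖ = 1) (horth : (inner ℂ Ψ₀ Ψ₁ : ℂ) = 0) (hΨ₁ : H Ψ₁ = (E₁ : ℂ) • Ψ₁) :
    (ωp - ωm) ^ 3 / ((ωp - ωm) ^ 2 + 4 * b ^ 2) - b ≤ E₁ - E₀ := by
  have hvv : re ⟪v, H v⟫_ℂ = ωm := by rw [hdiag]; exact Complex.ofReal_re ωm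
  have hE₀ωm : E₀ ≤ ωm := by
    obtain ⟨μ, hμ, hμv⟩ := hH.exists_hasEigenvalue_le_re_inner hv
    exact (Complex.ofReal_re μ ▸ hE₀min μ hμ).trans (hvv ▸ hμv)
  have hlow := hH.le_re_inner_map_self hv hvv.ge hperp hoff
  have hnorm {Ψ : V} (hΨ : ‖Ψ‖ = 1) : ‖⟪v, Ψ⟫_ℂ‖ ^ 2 + ‖Ψ - ⟪v, Ψ⟫_ℂ • v‖ ^ 2 = 1 := by
    rw [← norm_sq_eq_norm_inner_sq_add_norm_sub_sq hv, hΨ, one_pow]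
  refine gap_lower_bound_of_overlaps hω hb (norm_nonneg _) (norm_nonneg _) (norm_nonneg _)
    (norm_nonneg _) (hnorm hΨ₀norm) (hnorm hΨ₁norm) ?_ hE₀ωm ?_
    (norm_inner_mul_le_of_inner_eq_zero hv horth)
  · exact re_inner_map_self_of_eq_smul hΨ₀norm hΨ₀ ▸ hlow Ψ₀
  · exact re_inner_map_self_of_eq_smul hΨ₁norm hΨ₁ ▸ hlow Ψ₁

/-- If `Ψ₀` is a unit eigenvector of `H` with least eigenvalue `E₀` and `Ψ₁` is a
unit eigenvector orthogonal to `Ψ₀` with eigenvalue `E₁`, then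
`E₁ − E₀ ≥ (ω₊ − ω₋)³/((ω₊ − ω₋)² + 4b²) − b`. Here `ωm = ω₋`, `ωp = ω₊`. -/
theorem spectral_gap_lower_bound
    {V : Type*} [NormedAddCommGroup V] [InnerProductSpace ℂ V] [FiniteDimensional ℂ V]
    (H : V →ₗ[ℂ] V) (hH : H.IsSymmetric)
    (v : V) (hv : ‖v‖ = 1)
    (ωm ωp b : ℝ) (hω : ωm < ωp) (hb : 0 ≤ b)
    (hdiag : (inner ℂ v (H v) : ℂ) = (ωm : ℂ))
    (hperp : ∀ φ : V, (inner ℂ v φ : ℂ) = 0 → ωp * ‖φ‖ ^ 2 ≤ ((inner ℂ φ (H φ) : ℂ)).re)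
    (hoff : ∀ φ : V, (inner ℂ v φ : ℂ) = 0 → ‖(inner ℂ v (H φ) : ℂ)‖ ≤ b * ‖φ‖)
    (E₀ : ℝ) (hE₀ : Module.End.HasEigenvalue H (E₀ : ℂ))
    (hE₀min : ∀ E : ℂ, Module.End.HasEigenvalue H E → E₀ ≤ E.re)
    (Ψ₀ Ψ₁ : V) (E₁ : ℝ)
    (hΨ₀norm : ‖Ψ₀‖ = 1) (hΨ₀ : H Ψ₀ = (E₀ : ℂ) • Ψ₀)
    (hΨ₁norm : ‖Ψ₁‖ = 1) (horth : (inner ℂ Ψ₀ Ψ₁ : ℂ) = 0) (hΨ₁ : H Ψ₁ = (E₁ : ℂ) • Ψ₁) :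
    (ωp - ωm) ^ 3 / ((ωp - ωm) ^ 2 + 4 * b ^ 2) - b ≤ E₁ - E₀ :=
  spectral_gap_lower_bound_general H hH v hv ωm ωp b hω hb hdiag hperp hoff E₀ hE₀min Ψ₀ Ψ₁ E₁
    hΨ₀norm hΨ₀ hΨ₁norm horth hΨ₁
end

section
/- Let Δ > 0, 0 ≤ μ₀ < 1, α a real number with 1 − μ₀ ≤ α ≤ 1, and f₀ = (1 − μ₀)/10. Let λ' and f be real numbers with 1/5 < |λ'| ≤ 1/2 and 0 ≤ f ≤ f₀², and set G = 2Δ√(λ'² + f²α²). Then G³/(G² + 4f²Δ²) − fΔ ≥ f₀αΔ. -/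
/-- For `Δ > 0`, `0 ≤ μ₀ < 1`, `1 − μ₀ ≤ α ≤ 1`, `f₀ = (1 − μ₀)/10`,
`1/5 < |λ'| ≤ 1/2` and `0 ≤ f ≤ f₀²`, setting `G = 2Δ√(λ'² + f²α²)`, one has
`G³/(G² + 4f²Δ²) − fΔ ≥ f₀αΔ`. -/
theorem outer_region_gap_inequality
    (Δ μ₀ α f₀ l' f : ℝ) (hΔ : 0 < Δ) (hμ₀ : 0 ≤ μ₀) (hμ₀' : μ₀ < 1)
    (hα : 1 - μ₀ ≤ α) (hα' : α ≤ 1) (hf₀ : f₀ = (1 - μ₀) / 10)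
    (hl : 1/5 < |l'|) (hl' : |l'| ≤ 1/2) (hf : 0 ≤ f) (hf' : f ≤ f₀ ^ 2) :
    f₀ * α * Δ ≤
      (2 * Δ * Real.sqrt (l' ^ 2 + f ^ 2 * α ^ 2)) ^ 3 /
          ((2 * Δ * Real.sqrt (l' ^ 2 + f ^ 2 * α ^ 2)) ^ 2 + 4 * f ^ 2 * Δ ^ 2)
        - f * Δ := by
  set s := Real.sqrt (l' ^ 2 + f ^ 2 * α ^ 2) with hs_def
  have hf₀pos : 0 ≤ f₀ := by rw [hf₀]; linarith
  have hf₀le : f₀ ≤ 1/10 := by rw [hf₀]; linarith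
  have hfle : f ≤ 1/100 := le_trans hf' (by nlinarith)
  have hαpos : 0 < α := by linarith
  have hs2 : s ^ 2 = l' ^ 2 + f ^ 2 * α ^ 2 := Real.sq_sqrt (by positivity)
  have hsgt : 1/5 < s := by
    have h1 : |l'| ≤ s := by
      have := Real.sqrt_le_sqrt (show l'^2 ≤ l'^2 + f^2*α^2 from le_add_of_nonneg_right (by positivity))
      rwa [Real.sqrt_sq_eq_abs] at this
    linarith
  have hden : (0:ℝ) < s ^ 2 + f ^ 2 := by nlinarith
  have hspos : (0:ℝ) < s := by linarith
  have hden2 : (0:ℝ) < (2 * Δ * s) ^ 2 + 4 * f ^ 2 * Δ ^ 2 := by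
    nlinarith [mul_pos (mul_pos hΔ hΔ) (mul_pos hspos hspos), sq_nonneg (f*Δ)]
  have hrw : (2 * Δ * s) ^ 3 / ((2 * Δ * s) ^ 2 + 4 * f ^ 2 * Δ ^ 2)
      = Δ * (2 * s ^ 3 / (s ^ 2 + f ^ 2)) := by
    rw [mul_div_assoc', eq_div_iff (ne_of_gt hden), div_mul_eq_mul_div,
      div_eq_iff (ne_of_gt hden2)]
    ring
  rw [hrw]
  have hkey : (f₀ * α + f) * (s ^ 2 + f ^ 2) ≤ 2 * s ^ 3 := by
    have hfa : f₀ * α ≤ 1/10 := by nlinarith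
    nlinarith [sq_nonneg f, sq_nonneg s, mul_pos hspos hspos]
  have h2 : f₀ * α + f ≤ 2 * s ^ 3 / (s ^ 2 + f ^ 2) := by
    rw [le_div_iff₀ hden]; exact hkey
  nlinarith [mul_le_mul_of_nonneg_right h2 (le_of_lt hΔ)]
end
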